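/- arXiv:2006.02644 — 6 statements merged into one kernel-verified Lean document; each statement's English description precedes it below -/
import Mathlib

section
/- Let T : H → H be an affine operator with Fix T ≠ ∅. Then T is quasinonexpansive (i.e., ‖Tx − y‖ ≤ ‖x − y‖ for all x ∈ H and all y ∈ Fix T) if and only if T is nonexpansive (i.e., ‖Tx − Ty‖ ≤ ‖x − y‖ for all x, y ∈ H). -/
open Function

theorem affine_quasinonexpansive_iff_nonexpansive
    {H : Type*} [NormedAddCommGroup H] [InnerProductSpace ℝ H]
    (T : H → H)
    (haff : ∀ (x y : H) (α : ℝ), T (α • x + (1 - α) • y) = α • T x + (1 - α) • T y)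
    (hfix : (Function.fixedPoints T).Nonempty) :
    (∀ x : H, ∀ y ∈ Function.fixedPoints T, ‖T x - y‖ ≤ ‖x - y‖) ↔
    (∀ x y : H, ‖T x - T y‖ ≤ ‖x - y‖) := by
  obtain ⟨p, hp⟩ := hfix
  have hp' : T p = p := hp
  have key : ∀ x y : H, T (x - y + p) - p = T x - T y := by
    intro x y
    have h1 := haff (x - y + p) y (1/2 : ℝ)
    have h2 := haff x p (1/2 : ℝ)
    have e : (1/2 : ℝ) • (x - y + p) + (1 - (1/2 : ℝ)) • y
        = (1/2 : ℝ) • x + (1 - (1/2 : ℝ)) • p := by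
      module
    rw [e, h2] at h1
    have h3 := congrArg (fun z => (2 : ℝ) • z) h1
    simp only [smul_add, smul_smul] at h3
    norm_num at h3
    rw [hp'] at h3
    linear_combination (norm := module) h3.symm
  constructor
  · intro h x y
    have := h (x - y + p) p hp
    rw [key x y] at this
    simpa using this
  · intro h x y hy
    have hy' : T y = y := hy
    calc ‖T x - y‖ = ‖T x - T y‖ := by rw [hy']
    _ ≤ ‖x - y‖ := h x y
end

section
/- Let G : H → H be a γ-BAM with γ ∈ [0,1), and suppose Fix G is a closed affine subspace of H. Then for all x ∈ H and all y ∈ Fix G, ‖Gx − y‖² + (1 − γ²)‖x − P_{Fix G} x‖² ≤ ‖x − y‖². In particular, G is strictly quasinonexpansive: ‖Gx − y‖ < ‖x − y‖ for all x ∉ Fix G and y ∈ Fix G. -/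
open Function

/-- `P` is a metric (nearest-point) projection onto `C`. -/
def IsProjOn {H : Type*} [NormedAddCommGroup H] [InnerProductSpace ℝ H]
    (C : Set H) (P : H → H) : Prop :=
  ∀ x, P x ∈ C ∧ ∀ y ∈ C, ‖x - P x‖ ≤ ‖x - y‖

theorem bam_strictly_quasinonexpansive
    {H : Type*} [NormedAddCommGroup H] [InnerProductSpace ℝ H] [CompleteSpace H]
    (G : H → H) (γ : ℝ) (hγ0 : 0 ≤ γ) (hγ1 : γ < 1)
    (hne : (Function.fixedPoints G).Nonempty)
    (hcl : IsClosed (Function.fixedPoints G))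
    (haff : ∀ x ∈ Function.fixedPoints G, ∀ y ∈ Function.fixedPoints G, ∀ α : ℝ,
      α • x + (1 - α) • y ∈ Function.fixedPoints G)
    (P : H → H) (hP : IsProjOn (Function.fixedPoints G) P)
    (hPG : ∀ x, P (G x) = P x)
    (hineq : ∀ x, ‖G x - P x‖ ≤ γ * ‖x - P x‖) :
    (∀ x : H, ∀ y ∈ Function.fixedPoints G,
      ‖G x - y‖ ^ 2 + (1 - γ ^ 2) * ‖x - P x‖ ^ 2 ≤ ‖x - y‖ ^ 2) ∧
    (∀ x : H, x ∉ Function.fixedPoints G → ∀ y ∈ Function.fixedPoints G,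
      ‖G x - y‖ < ‖x - y‖) := by
  -- Orthogonality: ⟪x - P x, y - P x⟫ = 0 for y ∈ Fix G.
  have ortho : ∀ x : H, ∀ y ∈ Function.fixedPoints G,
      inner ℝ (x - P x) (y - P x) = (0 : ℝ) := by
    intro x y hy
    set c : ℝ := inner ℝ (x - P x) (y - P x) with hc
    have key : ∀ t : ℝ, 0 ≤ t ^ 2 * ‖y - P x‖ ^ 2 - 2 * t * c := by
      intro t
      have hz : t • y + (1 - t) • P x ∈ Function.fixedPoints G :=
        haff y hy (P x) (hP x).1 t
      have h1 := (hP x).2 _ hz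
      have hrw : x - (t • y + (1 - t) • P x) = (x - P x) - t • (y - P x) := by
        module
      rw [hrw] at h1
      have h2 : ‖x - P x‖ ^ 2 ≤ ‖(x - P x) - t • (y - P x)‖ ^ 2 := by
        have := norm_nonneg (x - P x)
        nlinarith [norm_nonneg ((x - P x) - t • (y - P x))]
      have h3 : ‖(x - P x) - t • (y - P x)‖ ^ 2
          = ‖x - P x‖ ^ 2 - 2 * t * c + t ^ 2 * ‖y - P x‖ ^ 2 := by
        rw [@norm_sub_sq_real, real_inner_smul_right, norm_smul]
        simp [mul_pow, ← hc]
        ring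
      nlinarith
    by_cases hn : ‖y - P x‖ = 0
    · have : y - P x = 0 := norm_eq_zero.mp hn
      simp [hc, this]
    · have hn2 : 0 < ‖y - P x‖ ^ 2 := by positivity
      have h := key (c / ‖y - P x‖ ^ 2)
      have heq : (c / ‖y - P x‖ ^ 2) ^ 2 * ‖y - P x‖ ^ 2
          - 2 * (c / ‖y - P x‖ ^ 2) * c = -(c ^ 2 / ‖y - P x‖ ^ 2) := by
        field_simp; ring
      rw [heq] at h
      have h2 : c ^ 2 / ‖y - P x‖ ^ 2 ≤ 0 := by linarith
      have h3 : c ^ 2 = (c ^ 2 / ‖y - P x‖ ^ 2) * ‖y - P x‖ ^ 2 := by field_simp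
      nlinarith [mul_nonpos_of_nonpos_of_nonneg h2 hn2.le]
  -- Pythagoras
  have pyth : ∀ x : H, ∀ y ∈ Function.fixedPoints G,
      ‖x - y‖ ^ 2 = ‖x - P x‖ ^ 2 + ‖P x - y‖ ^ 2 := by
    intro x y hy
    have hsplit : x - y = (x - P x) + (P x - y) := by abel
    rw [hsplit, @norm_add_sq_real]
    have : inner ℝ (x - P x) (P x - y) = (0 : ℝ) := by
      have h := ortho x y hy
      have : P x - y = -(y - P x) := by abel
      rw [this, inner_neg_right, h, neg_zero]
    rw [this]; ring
  have main : ∀ x : H, ∀ y ∈ Function.fixedPoints G,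
      ‖G x - y‖ ^ 2 + (1 - γ ^ 2) * ‖x - P x‖ ^ 2 ≤ ‖x - y‖ ^ 2 := by
    intro x y hy
    have hA := pyth x y hy
    have hB := pyth (G x) y hy
    rw [hPG] at hB
    have hC : ‖G x - P x‖ ^ 2 ≤ γ ^ 2 * ‖x - P x‖ ^ 2 := by
      have h := hineq x
      nlinarith [norm_nonneg (G x - P x), norm_nonneg (x - P x)]
    nlinarith
  refine ⟨main, fun x hx y hy => ?_⟩
  have hPx : P x ≠ x := fun h => hx (h ▸ (hP x).1)
  have hpos : 0 < ‖x - P x‖ := by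
    rw [norm_pos_iff, sub_ne_zero]; exact fun h => hPx h.symm
  have h := main x y hy
  have hγ2 : 0 < 1 - γ ^ 2 := by nlinarith
  have hlt : ‖G x - y‖ ^ 2 < ‖x - y‖ ^ 2 := by nlinarith [mul_pos hγ2 (pow_pos hpos 2)]
  exact lt_of_pow_lt_pow_left₀ 2 (norm_nonneg _) hlt
end

section
/- Let G : H → H be an affine map that is a BAM (for some constant γ ∈ [0,1)). Then G is nonexpansive. -/
open Function

theorem affine_bam_nonexpansive
    {H : Type*} [NormedAddCommGroup H] [InnerProductSpace ℝ H] [CompleteSpace H]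
    (G : H → H)
    (haff : ∀ (x y : H) (α : ℝ), G (α • x + (1 - α) • y) = α • G x + (1 - α) • G y)
    (γ : ℝ) (hγ0 : 0 ≤ γ) (hγ1 : γ < 1)
    (hne : (Function.fixedPoints G).Nonempty)
    (hcl : IsClosed (Function.fixedPoints G))
    (hcv : Convex ℝ (Function.fixedPoints G))
    (P : H → H) (hP : IsProjOn (Function.fixedPoints G) P)
    (hPG : ∀ x, P (G x) = P x)
    (hineq : ∀ x, ‖G x - P x‖ ≤ γ * ‖x - P x‖) :
    ∀ x y : H, ‖G x - G y‖ ≤ ‖x - y‖ := by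
  obtain ⟨p, hp⟩ := hne
  have hp' : G p = p := hp
  -- linear part of G around p
  set A : H → H := fun v => G (v + p) - p with hA
  have hhom : ∀ (α : ℝ) (v : H), A (α • v) = α • A v := by
    intro α v
    have h1 : α • v + p = α • (v + p) + (1 - α) • p := by module
    simp only [hA]
    rw [h1, haff, hp']
    module
  have hadd : ∀ v w : H, A (v + w) = A v + A w := by
    intro v w
    have h2 : A (v + w) = (2 : ℝ) • A ((1/2 : ℝ) • (v + w)) := by
      rw [← hhom]; congr 1; module
    have h3 : (1/2 : ℝ) • (v + w) + p = (1/2 : ℝ) • (v + p) + (1 - (1/2 : ℝ)) • (w + p) := by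
      module
    rw [h2]
    simp only [hA]
    rw [h3, haff]
    module
  -- fixed points correspond to fixed vectors of A
  have hfix : ∀ v : H, (v + p ∈ Function.fixedPoints G) ↔ A v = v := by
    intro v
    constructor
    · intro h; simp only [hA]; rw [show G (v + p) = v + p from h]; abel
    · intro h
      have h' : G (v + p) - p = v := h
      show G (v + p) = v + p
      have := congrArg (· + p) h'
      simpa using this
  -- the subspace of fixed vectors
  set K : Submodule ℝ H :=
    { carrier := {v | A v = v}
      add_mem' := fun {a b} ha hb => by
        show A (a + b) = a + b
        rw [hadd, ha, hb]
      zero_mem' := by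
        show A 0 = 0
        have := hhom 0 0
        simpa using this
      smul_mem' := fun c {a} ha => by
        show A (c • a) = c • a
        rw [hhom, ha] } with hK
  have hKmem : ∀ v : H, v ∈ K ↔ A v = v := fun v => Iff.rfl
  -- orthogonality of residual to fixed subspace
  have horth : ∀ x z : H, A z = z → inner ℝ (x - P x) z = (0 : ℝ) := by
    intro x z hz
    have hPx : P x ∈ Function.fixedPoints G := (hP x).1
    have hPxK : P x - p ∈ K := by
      rw [hKmem]
      exact (hfix (P x - p)).1 (by simpa using hPx)
    have hnorm : ‖(x - p) - (P x - p)‖ = ⨅ w : (↑K : Set H), ‖(x - p) - w‖ := by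
      apply le_antisymm
      · apply le_ciInf
        intro ⟨w, hw⟩
        have hwF : w + p ∈ Function.fixedPoints G := (hfix w).2 ((hKmem w).1 hw)
        have := (hP x).2 (w + p) hwF
        calc ‖x - p - (P x - p)‖ = ‖x - P x‖ := by congr 1; abel
          _ ≤ ‖x - (w + p)‖ := this
          _ = ‖x - p - w‖ := by congr 1; abel
      · have hbdd : BddBelow (Set.range fun w : (↑K : Set H) => ‖(x - p) - ↑w‖) := by
          refine ⟨0, ?_⟩
          rintro b ⟨w, rfl⟩
          exact norm_nonneg _
        exact ciInf_le hbdd ⟨P x - p, hPxK⟩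
    have := (Submodule.norm_eq_iInf_iff_real_inner_eq_zero K hPxK).1 hnorm z ((hKmem z).2 hz)
    have heq : x - p - (P x - p) = x - P x := by abel
    rwa [heq] at this
  intro x y
  set v := x - y with hv
  set xx := v + p with hxx
  set q := P xx - p with hqdef
  set w := xx - P xx with hwdef
  have hq : A q = q := (hfix q).1 (by
    have h' : q + p = P xx := by rw [hqdef]; abel
    rw [h']; exact (hP xx).1)
  have hvqw : v = q + w := by rw [hqdef, hwdef, hxx]; abel
  have hAv : A v = G xx - p := by simp [hA, hxx]
  have hAw : A w = G xx - P xx := by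
    have h1 : A v = A q + A w := by rw [hvqw, hadd]
    rw [hAv, hq] at h1
    have h2 : A w = G xx - p - q := by rw [h1]; abel
    rw [h2, hqdef]; abel
  have hwq : inner ℝ w q = (0 : ℝ) := horth xx q hq
  have hAwq : inner ℝ (A w) q = (0 : ℝ) := by
    rw [hAw, ← hPG xx]
    exact horth (G xx) q hq
  have hAwle : ‖A w‖ ≤ ‖w‖ := by
    rw [hAw]
    calc ‖G xx - P xx‖ ≤ γ * ‖xx - P xx‖ := hineq xx
      _ ≤ 1 * ‖xx - P xx‖ :=
          mul_le_mul_of_nonneg_right (le_of_lt hγ1) (norm_nonneg _)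
      _ = ‖w‖ := by rw [one_mul, hwdef]
  have hsq : ‖A v‖ ^ 2 ≤ ‖v‖ ^ 2 := by
    have e1 : ‖A v‖ ^ 2 = ‖q‖ ^ 2 + ‖A w‖ ^ 2 := by
      rw [hvqw, hadd, hq]
      rw [norm_add_sq_real, real_inner_comm, hAwq]; ring
    have e2 : ‖v‖ ^ 2 = ‖q‖ ^ 2 + ‖w‖ ^ 2 := by
      rw [hvqw, norm_add_sq_real, real_inner_comm, hwq]; ring
    rw [e1, e2]
    nlinarith [norm_nonneg (A w), norm_nonneg w]
  have hAvGxy : A v = G x - G y := by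
    have hx : A (x - p) = G x - p := by simp [hA]
    have hy : A (y - p) = G y - p := by simp [hA]
    have h1 : A (x - y) + A (y - p) = A (x - p) := by
      rw [← hadd]; congr 1; abel
    rw [hx, hy] at h1
    rw [hv]
    linear_combination (norm := abel) h1
  rw [← hAvGxy]
  nlinarith [hsq, norm_nonneg (A v), norm_nonneg v]
end

section
/- Let G₁, G₂ : H → H be γ₁-BAM and γ₂-BAM respectively, with U₁ := Fix G₁ and U₂ := Fix G₂ closed linear subspaces of H. Let x ∈ H with x ≠ P_{U₁∩U₂} x and G₁ x ≠ P_{U₁∩U₂} x, and set β₁ := ‖P_{U₂} G₁ x − P_{U₁∩U₂} x‖ / ‖G₁ x − P_{U₁∩U₂} x‖ and β₂ := ‖P_{U₁} x − P_{U₁∩U₂} x‖ / ‖x − P_{U₁∩U₂} x‖. Then ‖G₂ G₁ x − P_{U₁∩U₂} x‖² ≤ (γ₂² + (1−γ₂²)β₁²)(γ₁² + (1−γ₁²)β₂²) ‖x − P_{U₁∩U₂} x‖², and β₁ ∈ [0,1], β₂ ∈ [0,1]. -/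
open Function RealInnerProductSpace

/-- A metric projection onto a subspace satisfies the orthogonality relation. -/
lemma isProjOn_inner_eq_zero {H : Type*} [NormedAddCommGroup H] [InnerProductSpace ℝ H]
    (U : Submodule ℝ H) (P : H → H) (hP : IsProjOn (U : Set H) P) (z : H) :
    ∀ w ∈ U, (inner ℝ (z - P z) w : ℝ) = 0 := by
  have hPz : P z ∈ U := (hP z).1
  have hmin : ∀ y ∈ U, ‖z - P z‖ ≤ ‖z - y‖ := (hP z).2
  have h : ‖z - P z‖ = ⨅ w : (↑U : Set H), ‖z - w‖ := by
    apply le_antisymm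
    · exact le_ciInf fun w => hmin w w.2
    · exact ciInf_le ⟨0, by rintro y ⟨w, rfl⟩; exact norm_nonneg _⟩ (⟨P z, hPz⟩ : (↑U : Set H))
  exact (Submodule.norm_eq_iInf_iff_real_inner_eq_zero U hPz).1 h

/-- Pythagoras for a metric projection onto a subspace. -/
lemma isProjOn_pythagoras {H : Type*} [NormedAddCommGroup H] [InnerProductSpace ℝ H]
    (U : Submodule ℝ H) (P : H → H) (hP : IsProjOn (U : Set H) P) (z c : H) (hc : c ∈ U) :
    ‖z - c‖ ^ 2 = ‖z - P z‖ ^ 2 + ‖P z - c‖ ^ 2 := by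
  have horth : (inner ℝ (z - P z) (P z - c) : ℝ) = 0 :=
    isProjOn_inner_eq_zero U P hP z _ (U.sub_mem (hP z).1 hc)
  have hdecomp : z - c = (z - P z) + (P z - c) := by abel
  rw [hdecomp, norm_add_sq_real, horth]
  ring

/-- One-step estimate. -/
lemma bam_step {H : Type*} [NormedAddCommGroup H] [InnerProductSpace ℝ H]
    (γ : ℝ) (hγ0 : 0 ≤ γ) (y Gy q p : H)
    (h1 : ‖Gy - p‖ ^ 2 = ‖Gy - q‖ ^ 2 + ‖q - p‖ ^ 2)
    (h2 : ‖y - p‖ ^ 2 = ‖y - q‖ ^ 2 + ‖q - p‖ ^ 2)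
    (h3 : ‖Gy - q‖ ≤ γ * ‖y - q‖)
    (hy : y ≠ p) (β : ℝ) (hβ : β = ‖q - p‖ / ‖y - p‖) :
    ‖Gy - p‖ ^ 2 ≤ (γ ^ 2 + (1 - γ ^ 2) * β ^ 2) * ‖y - p‖ ^ 2 ∧ β ∈ Set.Icc (0 : ℝ) 1 := by
  have hN : (0 : ℝ) < ‖y - p‖ := by
    rw [norm_pos_iff]; exact sub_ne_zero_of_ne hy
  have hqle : ‖q - p‖ ^ 2 ≤ ‖y - p‖ ^ 2 := by nlinarith [sq_nonneg ‖y - q‖]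
  have hβsq : β ^ 2 * ‖y - p‖ ^ 2 = ‖q - p‖ ^ 2 := by
    rw [hβ]; field_simp
  have hβ0 : 0 ≤ β := by rw [hβ]; positivity
  have hβ1 : β ≤ 1 := by
    rw [hβ, div_le_one hN]
    nlinarith [norm_nonneg (q - p)]
  have hG2 : ‖Gy - q‖ ^ 2 ≤ γ ^ 2 * ‖y - q‖ ^ 2 := by
    nlinarith [norm_nonneg (Gy - q), norm_nonneg (y - q)]
  refine ⟨?_, hβ0, hβ1⟩
  nlinarith [sq_nonneg γ]

theorem composition_bam_key_estimate
    {H : Type*} [NormedAddCommGroup H] [InnerProductSpace ℝ H] [CompleteSpace H]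
    (U₁ U₂ : Submodule ℝ H)
    (hU₁ : IsClosed (U₁ : Set H)) (hU₂ : IsClosed (U₂ : Set H))
    (G₁ G₂ : H → H) (γ₁ γ₂ : ℝ)
    (hγ₁0 : 0 ≤ γ₁) (hγ₁1 : γ₁ < 1) (hγ₂0 : 0 ≤ γ₂) (hγ₂1 : γ₂ < 1)
    (hFix₁ : Function.fixedPoints G₁ = (U₁ : Set H))
    (hFix₂ : Function.fixedPoints G₂ = (U₂ : Set H))
    (P₁ P₂ P₁₂ : H → H)
    (hP₁ : IsProjOn (U₁ : Set H) P₁) (hP₂ : IsProjOn (U₂ : Set H) P₂)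
    (hP₁₂ : IsProjOn ((U₁ ⊓ U₂ : Submodule ℝ H) : Set H) P₁₂)
    (hPG₁ : ∀ x, P₁ (G₁ x) = P₁ x) (hPG₂ : ∀ x, P₂ (G₂ x) = P₂ x)
    (hineq₁ : ∀ x, ‖G₁ x - P₁ x‖ ≤ γ₁ * ‖x - P₁ x‖)
    (hineq₂ : ∀ x, ‖G₂ x - P₂ x‖ ≤ γ₂ * ‖x - P₂ x‖)
    (x : H) (hx : x ≠ P₁₂ x) (hGx : G₁ x ≠ P₁₂ x)
    (β₁ β₂ : ℝ)
    (hβ₁ : β₁ = ‖P₂ (G₁ x) - P₁₂ x‖ / ‖G₁ x - P₁₂ x‖)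
    (hβ₂ : β₂ = ‖P₁ x - P₁₂ x‖ / ‖x - P₁₂ x‖) :
    ‖G₂ (G₁ x) - P₁₂ x‖ ^ 2 ≤
      (γ₂ ^ 2 + (1 - γ₂ ^ 2) * β₁ ^ 2) * (γ₁ ^ 2 + (1 - γ₁ ^ 2) * β₂ ^ 2) *
        ‖x - P₁₂ x‖ ^ 2 ∧
    β₁ ∈ Set.Icc (0 : ℝ) 1 ∧ β₂ ∈ Set.Icc (0 : ℝ) 1 := by
  set p := P₁₂ x with hp
  have hpmem : p ∈ (U₁ ⊓ U₂ : Submodule ℝ H) := (hP₁₂ x).1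
  have hp1 : p ∈ U₁ := hpmem.1
  have hp2 : p ∈ U₂ := hpmem.2
  -- step 1: for G₁ on x
  have pyth1x : ‖x - p‖ ^ 2 = ‖x - P₁ x‖ ^ 2 + ‖P₁ x - p‖ ^ 2 :=
    isProjOn_pythagoras U₁ P₁ hP₁ x p hp1
  have pyth1G : ‖G₁ x - p‖ ^ 2 = ‖G₁ x - P₁ x‖ ^ 2 + ‖P₁ x - p‖ ^ 2 := by
    have := isProjOn_pythagoras U₁ P₁ hP₁ (G₁ x) p hp1
    rwa [hPG₁ x] at this
  have step1 := bam_step γ₁ hγ₁0 x (G₁ x) (P₁ x) p pyth1G pyth1x (hineq₁ x) hx β₂ hβ₂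
  -- step 2: for G₂ on y := G₁ x
  have pyth2y : ‖G₁ x - p‖ ^ 2 = ‖G₁ x - P₂ (G₁ x)‖ ^ 2 + ‖P₂ (G₁ x) - p‖ ^ 2 :=
    isProjOn_pythagoras U₂ P₂ hP₂ (G₁ x) p hp2
  have pyth2G : ‖G₂ (G₁ x) - p‖ ^ 2 = ‖G₂ (G₁ x) - P₂ (G₁ x)‖ ^ 2 + ‖P₂ (G₁ x) - p‖ ^ 2 := by
    have := isProjOn_pythagoras U₂ P₂ hP₂ (G₂ (G₁ x)) p hp2
    rwa [hPG₂ (G₁ x)] at this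
  have hineq₂' : ‖G₂ (G₁ x) - P₂ (G₁ x)‖ ≤ γ₂ * ‖G₁ x - P₂ (G₁ x)‖ := hineq₂ (G₁ x)
  have step2 := bam_step γ₂ hγ₂0 (G₁ x) (G₂ (G₁ x)) (P₂ (G₁ x)) p pyth2G pyth2y hineq₂' hGx β₁ hβ₁
  obtain ⟨s1, hβ₂0, hβ₂1⟩ := step1
  obtain ⟨s2, hβ₁0, hβ₁1⟩ := step2
  refine ⟨?_, ⟨hβ₁0, hβ₁1⟩, hβ₂0, hβ₂1⟩
  have hβ₁sq : β₁ ^ 2 ≤ 1 := by nlinarith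
  have hA : (0 : ℝ) ≤ γ₂ ^ 2 + (1 - γ₂ ^ 2) * β₁ ^ 2 := by
    nlinarith [mul_nonneg (sq_nonneg γ₂) (sub_nonneg.2 hβ₁sq), sq_nonneg β₁]
  calc ‖G₂ (G₁ x) - p‖ ^ 2 ≤ (γ₂ ^ 2 + (1 - γ₂ ^ 2) * β₁ ^ 2) * ‖G₁ x - p‖ ^ 2 := s2
    _ ≤ (γ₂ ^ 2 + (1 - γ₂ ^ 2) * β₁ ^ 2) * ((γ₁ ^ 2 + (1 - γ₁ ^ 2) * β₂ ^ 2) * ‖x - p‖ ^ 2) :=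
        mul_le_mul_of_nonneg_left s1 hA
    _ = _ := by ring
end

section
/- Let U₁ and U₂ be closed linear subspaces of H such that U₁ + U₂ is closed, and let c_F be the cosine of the Friedrichs angle between U₁ and U₂. Let G₁ be a γ₁-BAM with Fix G₁ = U₁ and G₂ a γ₂-BAM with Fix G₂ = U₂, γ₁, γ₂ ∈ [0,1). Set r := max{ √(γ₁² + (1−γ₁²)(1+c_F)/2), √(γ₂² + (1−γ₂²)(1+c_F)/2) }. Then r ∈ [max{γ₁,γ₂}, 1) and for all x ∈ H, ‖G₂ G₁ x − P_{U₁∩U₂} x‖ ≤ r ‖x − P_{U₁∩U₂} x‖. -/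
set_option maxHeartbeats 2000000

open Function
open scoped RealInnerProductSpace Pointwise

/-- The cosine of the Friedrichs angle between two subspaces. -/
noncomputable def friedrichsCos {H : Type*} [NormedAddCommGroup H]
    [InnerProductSpace ℝ H] (U V : Submodule ℝ H) : ℝ :=
  sSup {r : ℝ | ∃ u ∈ U ⊓ (U ⊓ V)ᗮ, ∃ v ∈ V ⊓ (U ⊓ V)ᗮ,
    ‖u‖ ≤ 1 ∧ ‖v‖ ≤ 1 ∧ r = |⟪u, v⟫|}


-- determinant inequality, case γ₂² ≤ γ₁², R = γ₁² + (1-γ₁²)(1+c)/2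
lemma det_case1 (c g h : ℝ) (hc0 : 0 ≤ c) (hc1 : c < 1) (hg0 : 0 < g) (hg1 : g < 1)
    (hh0 : 0 ≤ h) (hhg : h ≤ g) :
    0 ≤ ((g + (1-g)*((1+c)/2)) - h - (1-h)*c^2)
        *((g + (1-g)*((1+c)/2)) - g*h - g*(1-h)*(1-c^2)) - g*((1-h)^2*c^2*(1-c^2)) := by
  have hE0 : 0 ≤ (1-g)*((1+c)/2-c^2)*((1+c)/2+(1-(1+c)/2)*g) := by
    apply mul_nonneg (mul_nonneg (by nlinarith) (by nlinarith)); nlinarith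
  have hEg : 0 ≤ (1-g)^2*(((1+c)/2-c^2)*((1+c)/2) - c^2*g*(1-(1+c)/2)) := by
    apply mul_nonneg (sq_nonneg _)
    have k1 : 0 ≤ c^2*(1-(1+c)/2)*(1-g) :=
      mul_nonneg (mul_nonneg (sq_nonneg c) (by nlinarith)) (by nlinarith)
    have k2 : 0 ≤ ((1+c)/2-c^2)*((1+c)/2) - c^2*(1-(1+c)/2) := by
      nlinarith [sq_nonneg c, mul_nonneg hc0 (sq_nonneg c)]
    linarith
  have hidD : g*(((g + (1-g)*((1+c)/2)) - h - (1-h)*c^2)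
        *((g + (1-g)*((1+c)/2)) - g*h - g*(1-h)*(1-c^2)) - g*((1-h)^2*c^2*(1-c^2)))
      = (g-h)*((1-g)*((1+c)/2-c^2)*((1+c)/2+(1-(1+c)/2)*g))
        + h*((1-g)^2*(((1+c)/2-c^2)*((1+c)/2) - c^2*g*(1-(1+c)/2))) := by ring
  by_contra hDn
  push_neg at hDn
  have t0 := mul_neg_of_pos_of_neg hg0 hDn
  have t1 := mul_nonneg (sub_nonneg.2 hhg) hE0
  have t2 := mul_nonneg hh0 hEg
  linarith [hidD ▸ add_nonneg t1 t2]

-- determinant inequality, case γ₁² ≤ γ₂², R = γ₂² + (1-γ₂²)(1+c)/2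
lemma det_case2 (c g h : ℝ) (hc0 : 0 ≤ c) (hc1 : c < 1) (hg0 : 0 ≤ g)
    (hh1 : h < 1) (hhg : g ≤ h) :
    0 ≤ ((h + (1-h)*((1+c)/2)) - h - (1-h)*c^2)
        *((h + (1-h)*((1+c)/2)) - g*h - g*(1-h)*(1-c^2)) - g*((1-h)^2*c^2*(1-c^2)) := by
  have hg1 : g < 1 := lt_of_le_of_lt hhg hh1
  have w1 : g*(1-h) ≤ h*(1-g) := by nlinarith
  have w2 : (1-h)*((1+c)/2+g*c^2)
      ≤ (h + (1-h)*((1+c)/2)) - g*h - g*(1-h)*(1-c^2) := by nlinarith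
  have w3 : c^2*(1-c^2)*g ≤ ((1+c)/2-c^2)*((1+c)/2+g*c^2) := by
    have k1 : 0 ≤ c^2*(1-(1+c)/2)*(1-g) :=
      mul_nonneg (mul_nonneg (sq_nonneg c) (by nlinarith)) (by nlinarith)
    have k2 : 0 ≤ ((1+c)/2-c^2)*((1+c)/2) - c^2*(1-(1+c)/2) := by
      nlinarith [sq_nonneg c, mul_nonneg hc0 (sq_nonneg c)]
    nlinarith [k1, k2]
  have hsc : (0:ℝ) < (1+c)/2-c^2 := by nlinarith
  have hAeq : (h + (1-h)*((1+c)/2)) - h - (1-h)*c^2 = (1-h)*((1+c)/2-c^2) := by ring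
  rw [hAeq]
  have w4 : (1-h)*((1+c)/2-c^2)*((1-h)*((1+c)/2+g*c^2))
      ≤ (1-h)*((1+c)/2-c^2)*((h + (1-h)*((1+c)/2)) - g*h - g*(1-h)*(1-c^2)) := by
    apply mul_le_mul_of_nonneg_left w2 (by nlinarith)
  have w5 : (1-h)*(1-h)*(c^2*(1-c^2)*g) ≤ (1-h)*(1-h)*(((1+c)/2-c^2)*((1+c)/2+g*c^2)) := by
    apply mul_le_mul_of_nonneg_left w3 (by nlinarith)
  nlinarith [w4, w5]

-- quadratic-form step
lemma quad_step (c γ₁ γ₂ σ α β ξ u r R : ℝ)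
    (hc0 : 0 ≤ c) (hγ₂0 : 0 ≤ γ₂) (hh1 : γ₂^2 < 1)
    (hσ : σ^2 = 1 - c^2)
    (hgpos : 0 < γ₁^2)
    (hgξ : β^2 ≤ γ₁^2*ξ^2)
    (huK2 : u^2 ≤ (c*α+σ*β)^2)
    (hRpos : 0 < R) (hRr : R ≤ r^2) (hA : 0 < R - γ₂^2 - (1-γ₂^2)*c^2)
    (hD : 0 ≤ (R - γ₂^2 - (1-γ₂^2)*c^2)*(R - γ₁^2*γ₂^2 - γ₁^2*(1-γ₂^2)*(1-c^2))
        - γ₁^2*((1-γ₂^2)^2*c^2*(1-c^2))) :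
    γ₂^2*(α^2+β^2) + (1-γ₂^2)*u^2 ≤ r^2*(α^2+ξ^2) := by
  have hDσ : 0 ≤ (R - γ₂^2 - (1-γ₂^2)*c^2)*(R - γ₁^2*γ₂^2 - γ₁^2*(1-γ₂^2)*σ^2)
      - γ₁^2*(((1-γ₂^2)*c*σ)^2) := by
    have e1 : ((1-γ₂^2)*c*σ)^2 = (1-γ₂^2)^2*c^2*(1-c^2) := by
      rw [mul_pow, mul_pow, hσ]
    rw [e1, hσ]; exact hD
  have hT : 0 ≤ R*(α^2+ξ^2) - (γ₂^2*α^2 + γ₂^2*β^2 + (1-γ₂^2)*(c*α+σ*β)^2) := by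
    by_contra hTn
    push_neg at hTn
    have hid : γ₁^2*(R - γ₂^2 - (1-γ₂^2)*c^2)
          *(R*(α^2+ξ^2) - (γ₂^2*α^2 + γ₂^2*β^2 + (1-γ₂^2)*(c*α+σ*β)^2))
        = γ₁^2*((R - γ₂^2 - (1-γ₂^2)*c^2)*α - ((1-γ₂^2)*c*σ)*β)^2
          + ((R - γ₂^2 - (1-γ₂^2)*c^2)*(R - γ₁^2*γ₂^2 - γ₁^2*(1-γ₂^2)*σ^2)
              - γ₁^2*(((1-γ₂^2)*c*σ)^2))*β^2
          + (R - γ₂^2 - (1-γ₂^2)*c^2)*R*(γ₁^2*ξ^2 - β^2) := by ring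
    have t1 : 0 ≤ γ₁^2*((R - γ₂^2 - (1-γ₂^2)*c^2)*α - ((1-γ₂^2)*c*σ)*β)^2 := by positivity
    have t2 : 0 ≤ ((R - γ₂^2 - (1-γ₂^2)*c^2)*(R - γ₁^2*γ₂^2 - γ₁^2*(1-γ₂^2)*σ^2)
        - γ₁^2*(((1-γ₂^2)*c*σ)^2))*β^2 := mul_nonneg hDσ (sq_nonneg _)
    have t3 : 0 ≤ (R - γ₂^2 - (1-γ₂^2)*c^2)*R*(γ₁^2*ξ^2 - β^2) :=
      mul_nonneg (mul_nonneg hA.le hRpos.le) (by linarith)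
    have t4 := mul_neg_of_pos_of_neg (mul_pos hgpos hA) hTn
    linarith [hid ▸ add_nonneg (add_nonneg t1 t2) t3]
  have f1 : (1-γ₂^2)*u^2 ≤ (1-γ₂^2)*((c*α+σ*β)^2) :=
    mul_le_mul_of_nonneg_left huK2 (by linarith)
  have f2 : R*(α^2+ξ^2) ≤ r^2*(α^2+ξ^2) :=
    mul_le_mul_of_nonneg_right hRr (by positivity)
  linarith

lemma Rpos_aux (c γ : ℝ) (hc0 : 0 ≤ c) (hγ0 : 0 ≤ γ) (hγ1 : γ < 1) :
    0 < γ^2 + (1-γ^2)*((1+c)/2) := by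
  nlinarith [mul_pos (by nlinarith : (0:ℝ) < 1-γ^2) (by nlinarith : (0:ℝ) < (1+c)/2), sq_nonneg γ]

lemma Apos_case1 (c γ₁ γ₂ : ℝ) (hc0 : 0 ≤ c) (hc1 : c < 1) (hγ₁1 : γ₁ < 1)
    (hhg : γ₂^2 ≤ γ₁^2) (hg1 : γ₁^2 < 1) :
    0 < γ₁^2 + (1-γ₁^2)*((1+c)/2) - γ₂^2 - (1-γ₂^2)*c^2 := by
  nlinarith [mul_pos (by nlinarith : (0:ℝ) < 1-γ₁^2)
    (by nlinarith : (0:ℝ) < (1+c)/2 - c^2),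
    mul_nonneg (sub_nonneg.2 hhg) (by nlinarith : (0:ℝ) ≤ 1-c^2)]

lemma Apos_case2 (c γ₂ : ℝ) (hc0 : 0 ≤ c) (hc1 : c < 1) (hh1 : γ₂^2 < 1) :
    0 < γ₂^2 + (1-γ₂^2)*((1+c)/2) - γ₂^2 - (1-γ₂^2)*c^2 := by
  nlinarith [mul_pos (by nlinarith : (0:ℝ) < 1-γ₂^2)
    (by nlinarith : (0:ℝ) < (1+c)/2 - c^2)]

lemma scalar_main (c γ₁ γ₂ σ α β ξ u q m r : ℝ)
    (hc0 : 0 ≤ c) (hc1 : c < 1) (hγ₁0 : 0 ≤ γ₁) (hγ₁1 : γ₁ < 1)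
    (hγ₂0 : 0 ≤ γ₂) (hγ₂1 : γ₂ < 1)
    (hσ0 : 0 ≤ σ) (hσ : σ^2 = 1 - c^2)
    (hα : 0 ≤ α) (hβ : 0 ≤ β) (hξ : 0 ≤ ξ) (hu0 : 0 ≤ u) (hq0 : 0 ≤ q) (hm0 : 0 ≤ m)
    (hqc : q ≤ c*u) (hpyth : m^2 + q^2 ≤ u^2) (huab : u^2 ≤ α*q + β*m) (hβξ : β ≤ γ₁*ξ)
    (hr1 : γ₁^2 + (1-γ₁^2)*((1+c)/2) ≤ r^2) (hr2 : γ₂^2 + (1-γ₂^2)*((1+c)/2) ≤ r^2) :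
    γ₂^2*(α^2+β^2) + (1-γ₂^2)*u^2 ≤ r^2*(α^2+ξ^2) := by
  have hσpos : 0 < σ := by
    rcases hσ0.lt_or_eq with h | h
    · exact h
    · exfalso; nlinarith
  have hh1 : γ₂^2 < 1 := by nlinarith [sq_nonneg γ₂]
  have hg1 : γ₁^2 < 1 := by nlinarith [sq_nonneg γ₁]
  have hgξ : β^2 ≤ γ₁^2*ξ^2 := by
    calc β^2 ≤ (γ₁*ξ)^2 := pow_le_pow_left₀ hβ hβξ 2
    _ = γ₁^2*ξ^2 := by ring
  rcases le_total (σ*α) (c*β) with hcase | hcase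
  · -- Case A : u² ≤ α²+β²
    have hA1 : (1-c^2)*α^2 ≤ c^2*β^2 := by
      nlinarith [mul_le_mul hcase hcase (by positivity) (by positivity : (0:ℝ) ≤ c*β)]
    have hu2 : u^2 ≤ α^2 + β^2 := by
      rcases hu0.lt_or_eq with hu | hu
      · have hcs : (α*q+β*m)^2 ≤ (α^2+β^2)*(q^2+m^2) := by nlinarith [sq_nonneg (α*m-β*q)]
        nlinarith [sq_nonneg u, mul_pos hu hu]
      · nlinarith
    have hA3 : (1-c)*α^2 ≤ (1+c)*ξ^2 := by nlinarith [sq_nonneg (c*γ₁*ξ), sq_nonneg ξ]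
    nlinarith [mul_nonneg (by nlinarith : (0:ℝ) ≤ 1-γ₁^2) (sub_nonneg.2 hA3),
      sq_nonneg α, sq_nonneg ξ,
      mul_nonneg (by nlinarith : (0:ℝ) ≤ 1-γ₂^2) (sub_nonneg.2 hu2)]
  · -- Case B : u ≤ c*α + σ*β
    have hKnn : 0 ≤ c*α + σ*β := by positivity
    have huK : u ≤ c*α + σ*β := by
      rcases hu0.lt_or_eq with hu | hu
      · have e1 : σ^2*q^2 = (1-c^2)*q^2 := by rw [hσ]
        have e2 : σ^2*m^2 = (1-c^2)*m^2 := by rw [hσ]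
        have hcq : (c*q+σ*m)^2 ≤ u^2 := by
          linarith [sq_nonneg (c*m-σ*q), hpyth, e1, e2]
        have hcq' : c*q+σ*m ≤ u := le_of_pow_le_pow_left₀ two_ne_zero hu0 hcq
        have h2 : σ*(u^2) ≤ σ*(α*q + β*m) := mul_le_mul_of_nonneg_left huab hσ0
        have hm2 : σ*m ≤ u - c*q := by linarith
        have h3 : β*(σ*m) ≤ β*(u-c*q) := mul_le_mul_of_nonneg_left hm2 hβ
        have h4 : q*(σ*α-c*β) ≤ (c*u)*(σ*α-c*β) :=
          mul_le_mul_of_nonneg_right hqc (by linarith)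
        have h5 : (1-c^2)*(β*u) = σ^2*(β*u) := by rw [hσ]
        have hstep : u*u ≤ u*(c*α+σ*β) := by
          have h6 : σ*(u*u) ≤ σ*(u*(c*α+σ*β)) := by linarith [h2, h3, h4, h5]
          exact le_of_mul_le_mul_left h6 hσpos
        exact le_of_mul_le_mul_left hstep hu
      · linarith
    have huK2 : u^2 ≤ (c*α+σ*β)^2 := pow_le_pow_left₀ hu0 huK 2
    clear hqc hpyth huab hq0 hm0 hcase hKnn huK
    rcases eq_or_lt_of_le hγ₁0 with hγ₁z | hγ₁pos
    · -- γ₁ = 0 so β = 0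
      have hβ0 : β = 0 := le_antisymm (by rw [← hγ₁z] at hβξ; simpa using hβξ) hβ
      subst hβ0
      have e : u^2 ≤ c^2*α^2 := by
        calc u^2 ≤ (c*α+σ*0)^2 := huK2
        _ = c^2*α^2 := by ring
      have m1 : (1-γ₂^2)*u^2 ≤ (1-γ₂^2)*(c^2*α^2) :=
        mul_le_mul_of_nonneg_left e (by nlinarith)
      have m2 : (γ₂^2+(1-γ₂^2)*c^2)*α^2 ≤ (γ₂^2+(1-γ₂^2)*((1+c)/2))*α^2 := by
        apply mul_le_mul_of_nonneg_right ?_ (sq_nonneg α)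
        nlinarith [mul_nonneg (by nlinarith : (0:ℝ) ≤ 1-γ₂^2) (by nlinarith : (0:ℝ) ≤ (1+c)/2-c^2)]
      have m3 : (γ₂^2+(1-γ₂^2)*((1+c)/2))*α^2 ≤ r^2*α^2 :=
        mul_le_mul_of_nonneg_right hr2 (sq_nonneg α)
      have m4 : (0:ℝ) ≤ r^2*ξ^2 := by positivity
      nlinarith [m1, m2, m3, m4]
    · have hgpos : 0 < γ₁^2 := by positivity
      rcases le_total γ₂ γ₁ with hord | hord
      · -- γ₂ ≤ γ₁ : R = I₁
        have hhg : γ₂^2 ≤ γ₁^2 := pow_le_pow_left₀ hγ₂0 hord 2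
        apply quad_step c γ₁ γ₂ σ α β ξ u r (γ₁^2 + (1-γ₁^2)*((1+c)/2)) hc0 hγ₂0 hh1 hσ
          hgpos hgξ huK2 (Rpos_aux c γ₁ hc0 hγ₁0 hγ₁1) hr1
          (Apos_case1 c γ₁ γ₂ hc0 hc1 hγ₁1 hhg hg1)
        exact det_case1 c (γ₁^2) (γ₂^2) hc0 hc1 hgpos hg1 (by positivity) hhg
      · -- γ₁ ≤ γ₂ : R = I₂
        have hhg : γ₁^2 ≤ γ₂^2 := pow_le_pow_left₀ hγ₁0 hord 2
        apply quad_step c γ₁ γ₂ σ α β ξ u r (γ₂^2 + (1-γ₂^2)*((1+c)/2)) hc0 hγ₂0 hh1 hσ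
          hgpos hgξ huK2 (Rpos_aux c γ₂ hc0 hγ₂0 hγ₂1) hr2
          (Apos_case2 c γ₂ hc0 hc1 hh1)
        exact det_case2 c (γ₁^2) (γ₂^2) hc0 hc1 (by positivity) hh1 hhg
section proj
variable {H : Type*} [NormedAddCommGroup H] [InnerProductSpace ℝ H]

lemma isProjOn_inner_eq_zero_s13 {C : Submodule ℝ H} {P : H → H}
    (hP : IsProjOn (C : Set H) P) (x : H) {w : H} (hw : w ∈ C) :
    ⟪x - P x, w⟫ = 0 := by
  by_cases hw0 : w = 0
  · simp [hw0]
  have hPx := (hP x).1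
  set I := ⟪x - P x, w⟫ with hI
  have key : ∀ t : ℝ, ‖x - P x‖^2 ≤ ‖x - P x‖^2 - 2*(t*I) + t^2*‖w‖^2 := by
    intro t
    have hmem : P x + t • w ∈ (C : Set H) := C.add_mem hPx (C.smul_mem t hw)
    have h1 := (hP x).2 _ hmem
    have h2 : x - (P x + t • w) = (x - P x) - t • w := by abel
    have h3 : ‖(x - P x) - t • w‖^2 = ‖x - P x‖^2 - 2*(t*I) + t^2*‖w‖^2 := by
      rw [norm_sub_sq_real, real_inner_smul_right, norm_smul, Real.norm_eq_abs, mul_pow,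
        sq_abs, ← hI]
    calc ‖x - P x‖^2 ≤ ‖x - (P x + t • w)‖^2 := by
          apply pow_le_pow_left₀ (norm_nonneg _) h1
      _ = _ := by rw [h2, h3]
  have hW : (0:ℝ) < ‖w‖^2 := pow_pos (norm_pos_iff.2 hw0) 2
  have h0 : 0 ≤ -2*(I/‖w‖^2)*I + (I/‖w‖^2)^2*‖w‖^2 := by
    have := key (I/‖w‖^2); nlinarith [this]
  have h1 : 0 ≤ (-2*(I/‖w‖^2)*I + (I/‖w‖^2)^2*‖w‖^2)*‖w‖^2 := mul_nonneg h0 hW.le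
  have h2 : (-2*(I/‖w‖^2)*I + (I/‖w‖^2)^2*‖w‖^2)*‖w‖^2 = -(I^2) := by
    field_simp
    ring
  have h3 : I^2 ≤ 0 := by linarith [h1, h2 ▸ h1]
  have h4 : I^2 = 0 := le_antisymm h3 (sq_nonneg I)
  exact pow_eq_zero_iff two_ne_zero |>.mp h4

lemma isProjOn_eq {C : Submodule ℝ H} {P : H → H} (hP : IsProjOn (C : Set H) P) {x p : H}
    (hp : p ∈ C) (hperp : ∀ w ∈ C, ⟪x - p, w⟫ = 0) : P x = p := by
  have h1 : P x - p ∈ C := C.sub_mem (hP x).1 hp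
  have a1 := isProjOn_inner_eq_zero_s13 hP x h1
  have a2 := hperp _ h1
  have h2 : ⟪P x - p, P x - p⟫ = 0 := by
    have e : ⟪x - p, P x - p⟫ - ⟪x - P x, P x - p⟫ = ⟪P x - p, P x - p⟫ := by
      rw [← inner_sub_left]
      congr 1
      abel
    rw [← e, a1, a2]
    ring
  have := inner_self_eq_zero.mp h2
  exact sub_eq_zero.mp this
end proj

section fried
variable {H : Type*} [NormedAddCommGroup H] [InnerProductSpace ℝ H]
variable (U V : Submodule ℝ H)

lemma friedrichs_zero_mem : (0:ℝ) ∈ {r : ℝ | ∃ u ∈ U ⊓ (U ⊓ V)ᗮ, ∃ v ∈ V ⊓ (U ⊓ V)ᗮ,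
    ‖u‖ ≤ 1 ∧ ‖v‖ ≤ 1 ∧ r = |⟪u, v⟫|} :=
  ⟨0, zero_mem _, 0, zero_mem _, by simp, by simp, by simp⟩

lemma friedrichs_bddAbove : BddAbove {r : ℝ | ∃ u ∈ U ⊓ (U ⊓ V)ᗮ, ∃ v ∈ V ⊓ (U ⊓ V)ᗮ,
    ‖u‖ ≤ 1 ∧ ‖v‖ ≤ 1 ∧ r = |⟪u, v⟫|} := by
  refine ⟨1, ?_⟩
  rintro r ⟨u, hu, v, hv, hu1, hv1, rfl⟩
  calc |⟪u, v⟫| ≤ ‖u‖ * ‖v‖ := abs_real_inner_le_norm _ _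
  _ ≤ 1 := by nlinarith [norm_nonneg u, norm_nonneg v]

lemma friedrichsCos_nonneg : 0 ≤ friedrichsCos U V :=
  le_csSup (friedrichs_bddAbove U V) (friedrichs_zero_mem U V)

lemma friedrichsCos_le_one : friedrichsCos U V ≤ 1 := by
  apply csSup_le ⟨0, friedrichs_zero_mem U V⟩
  rintro r ⟨u, hu, v, hv, hu1, hv1, rfl⟩
  calc |⟪u, v⟫| ≤ ‖u‖ * ‖v‖ := abs_real_inner_le_norm _ _
  _ ≤ 1 := by nlinarith [norm_nonneg u, norm_nonneg v]

lemma friedrichsCos_bound {a b : H} (ha : a ∈ U ⊓ (U ⊓ V)ᗮ) (hb : b ∈ V ⊓ (U ⊓ V)ᗮ) :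
    |⟪a, b⟫| ≤ friedrichsCos U V * (‖a‖ * ‖b‖) := by
  by_cases ha0 : a = 0
  · simp [ha0]
  by_cases hb0 : b = 0
  · simp [hb0]
  have hna : (0:ℝ) < ‖a‖ := norm_pos_iff.2 ha0
  have hnb : (0:ℝ) < ‖b‖ := norm_pos_iff.2 hb0
  set a' : H := ‖a‖⁻¹ • a with ha'
  set b' : H := ‖b‖⁻¹ • b with hb'
  have ha'm : a' ∈ U ⊓ (U ⊓ V)ᗮ := Submodule.smul_mem _ _ ha
  have hb'm : b' ∈ V ⊓ (U ⊓ V)ᗮ := Submodule.smul_mem _ _ hb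
  have ha'n : ‖a'‖ = 1 := by
    rw [ha', norm_smul, norm_inv, norm_norm, inv_mul_cancel₀ hna.ne']
  have hb'n : ‖b'‖ = 1 := by
    rw [hb', norm_smul, norm_inv, norm_norm, inv_mul_cancel₀ hnb.ne']
  have hmem : |⟪a', b'⟫| ∈ {r : ℝ | ∃ u ∈ U ⊓ (U ⊓ V)ᗮ, ∃ v ∈ V ⊓ (U ⊓ V)ᗮ,
      ‖u‖ ≤ 1 ∧ ‖v‖ ≤ 1 ∧ r = |⟪u, v⟫|} :=
    ⟨a', ha'm, b', hb'm, le_of_eq ha'n, le_of_eq hb'n, rfl⟩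
  have hle : |⟪a', b'⟫| ≤ friedrichsCos U V := le_csSup (friedrichs_bddAbove U V) hmem
  have hinner : ⟪a', b'⟫ = ‖a‖⁻¹ * (‖b‖⁻¹ * ⟪a, b⟫) := by
    rw [ha', hb', real_inner_smul_left, real_inner_smul_right]
  have habs : |⟪a', b'⟫| = ‖a‖⁻¹ * ‖b‖⁻¹ * |⟪a, b⟫| := by
    rw [hinner, abs_mul, abs_mul, abs_of_pos (inv_pos.2 hna), abs_of_pos (inv_pos.2 hnb)]
    ring
  rw [habs] at hle
  have := mul_le_mul_of_nonneg_right hle (by positivity : (0:ℝ) ≤ ‖a‖ * ‖b‖)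
  calc |⟪a, b⟫| = ‖a‖⁻¹ * ‖b‖⁻¹ * |⟪a, b⟫| * (‖a‖ * ‖b‖) := by
        field_simp
  _ ≤ friedrichsCos U V * (‖a‖ * ‖b‖) := this

end fried

section lt1
variable {H : Type*} [NormedAddCommGroup H] [InnerProductSpace ℝ H] [CompleteSpace H]

lemma friedrichsCos_lt_one (U V : Submodule ℝ H)
    (hU : IsClosed (U : Set H)) (hV : IsClosed (V : Set H))
    (hsum : IsClosed ((U : Set H) + (V : Set H))) : friedrichsCos U V < 1 := by
  haveI : CompleteSpace U := hU.completeSpace_coe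
  haveI : CompleteSpace V := hV.completeSpace_coe
  have hS : IsClosed ((U ⊔ V : Submodule ℝ H) : Set H) := by
    rw [Submodule.coe_sup]; exact hsum
  haveI : CompleteSpace (U ⊔ V : Submodule ℝ H) := hS.completeSpace_coe
  set φ : (U × V) →L[ℝ] H :=
    U.subtypeL.comp (ContinuousLinearMap.fst ℝ U V)
      + V.subtypeL.comp (ContinuousLinearMap.snd ℝ U V) with hφ
  have hφval : ∀ p : U × V, φ p = (p.1 : H) + (p.2 : H) := by
    intro p; simp [hφ]
  have hφmem : ∀ p : U × V, φ p ∈ (U ⊔ V : Submodule ℝ H) := by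
    intro p
    rw [hφval]
    exact Submodule.add_mem _ (Submodule.mem_sup_left p.1.2) (Submodule.mem_sup_right p.2.2)
  set f : (U × V) →L[ℝ] (U ⊔ V : Submodule ℝ H) := φ.codRestrict _ hφmem with hf
  have hsurj : Function.Surjective f := by
    rintro ⟨y, hy⟩
    rcases Submodule.mem_sup.1 hy with ⟨a, ha, b, hb, rfl⟩
    refine ⟨(⟨a, ha⟩, ⟨b, hb⟩), ?_⟩
    apply Subtype.ext
    simp only [hf, ContinuousLinearMap.coe_codRestrict_apply]
    rw [hφval]
  obtain ⟨C, hC, hpre⟩ := f.exists_preimage_norm_le hsurj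
  set B : ℝ := 1 - 1/(2*C^2) with hB
  have hBlt : B < 1 := by
    rw [hB]
    have : 0 < 1/(2*C^2) := by positivity
    linarith
  have key : ∀ u' v' : H, u' ∈ U ⊓ (U ⊓ V)ᗮ → v' ∈ V ⊓ (U ⊓ V)ᗮ →
      ‖u'‖ = 1 → ‖v'‖ = 1 → ⟪u', v'⟫ ≤ B := by
    intro u' v' hu' hv' hnu hnv
    have hz : u' - v' ∈ (U ⊔ V : Submodule ℝ H) :=
      Submodule.sub_mem _ (Submodule.mem_sup_left hu'.1) (Submodule.mem_sup_right hv'.1)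
    obtain ⟨⟨a, b⟩, hfab, hnab⟩ := hpre ⟨u' - v', hz⟩
    have hab : (a : H) + (b : H) = u' - v' := by
      have := congrArg (Subtype.val) hfab
      simpa [hf, ContinuousLinearMap.coe_codRestrict_apply, hφval] using this
    have hmem : u' - (a : H) ∈ U ⊓ V := by
      constructor
      · exact U.sub_mem hu'.1 a.2
      · have e : u' - (a : H) = v' + (b : H) := by
          rw [eq_comm, ← sub_eq_zero]
          have : (a:H) + b - (u' - v') = 0 := by rw [hab]; abel
          rw [← this]; abel
        rw [e]
        exact V.add_mem hv'.1 b.2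
    have h1 : ⟪u' - (a : H), u'⟫ = 0 := hu'.2 _ hmem
    have h2 : (1:ℝ) = ⟪(a : H), u'⟫ := by
      have e : ⟪u' - (a:H), u'⟫ = ⟪u', u'⟫ - ⟪(a:H), u'⟫ := inner_sub_left _ _ _
      rw [h1] at e
      have e2 : ⟪u', u'⟫ = (1:ℝ) := by
        rw [real_inner_self_eq_norm_sq, hnu]; norm_num
      rw [e2] at e
      linarith
    have h3 : (1:ℝ) ≤ ‖(a : H)‖ := by
      have hcs := abs_real_inner_le_norm (a : H) u'
      rw [hnu, mul_one] at hcs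
      calc (1:ℝ) = ⟪(a:H), u'⟫ := h2
      _ ≤ |⟪(a:H), u'⟫| := le_abs_self _
      _ ≤ ‖(a:H)‖ := hcs
    have h4 : ‖(a : H)‖ ≤ C * ‖u' - v'‖ := by
      have e1 : ‖(a : H)‖ = ‖a‖ := rfl
      have e2 : ‖a‖ ≤ ‖((a, b) : U × V)‖ := norm_fst_le (a, b)
      have e3 : ‖(⟨u' - v', hz⟩ : (U ⊔ V : Submodule ℝ H))‖ = ‖u' - v'‖ := rfl
      rw [e1]
      calc ‖a‖ ≤ ‖((a, b) : U × V)‖ := e2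
      _ ≤ C * ‖(⟨u' - v', hz⟩ : (U ⊔ V : Submodule ℝ H))‖ := hnab
      _ = C * ‖u' - v'‖ := by rw [e3]
    have h5 : (1:ℝ) ≤ C * ‖u' - v'‖ := le_trans h3 h4
    have h6 : 1/C ≤ ‖u' - v'‖ := by
      rw [div_le_iff₀ hC] at *
      linarith [h5]
    have h7 : 1/C^2 ≤ ‖u' - v'‖^2 := by
      have := mul_self_le_mul_self (by positivity : (0:ℝ) ≤ 1/C) h6
      calc 1/C^2 = (1/C)*(1/C) := by ring
      _ ≤ ‖u' - v'‖ * ‖u' - v'‖ := this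
      _ = ‖u' - v'‖^2 := by ring
    have h8 : ‖u' - v'‖^2 = 2 - 2*⟪u', v'⟫ := by
      rw [norm_sub_sq_real, hnu, hnv]; ring
    have h9 : (0:ℝ) < 1/C^2 := by positivity
    have e : 1/(2*C^2) = (1/C^2)/2 := by ring
    rw [hB]
    linarith [h7, h8, e]
  have hfin : friedrichsCos U V ≤ max 0 B := by
    apply csSup_le ⟨0, friedrichs_zero_mem U V⟩
    rintro r ⟨u, hu, v, hv, hu1, hv1, rfl⟩
    by_cases hu0 : u = 0
    · simp [hu0]
    by_cases hv0 : v = 0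
    · simp [hv0]
    have hna : (0:ℝ) < ‖u‖ := norm_pos_iff.2 hu0
    have hnb : (0:ℝ) < ‖v‖ := norm_pos_iff.2 hv0
    set u' : H := ‖u‖⁻¹ • u with hu'
    set v' : H := ‖v‖⁻¹ • v with hv'
    have hu'm : u' ∈ U ⊓ (U ⊓ V)ᗮ := Submodule.smul_mem _ _ hu
    have hv'm : v' ∈ V ⊓ (U ⊓ V)ᗮ := Submodule.smul_mem _ _ hv
    have hv'm' : -v' ∈ V ⊓ (U ⊓ V)ᗮ := Submodule.neg_mem _ hv'm
    have hu'n : ‖u'‖ = 1 := by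
      rw [hu', norm_smul, norm_inv, norm_norm, inv_mul_cancel₀ hna.ne']
    have hv'n : ‖v'‖ = 1 := by
      rw [hv', norm_smul, norm_inv, norm_norm, inv_mul_cancel₀ hnb.ne']
    have hv'n' : ‖-v'‖ = 1 := by rw [norm_neg]; exact hv'n
    have k1 := key u' v' hu'm hv'm hu'n hv'n
    have k2 := key u' (-v') hu'm hv'm' hu'n hv'n'
    rw [inner_neg_right] at k2
    have habs : |⟪u', v'⟫| ≤ B := abs_le.2 ⟨by linarith, k1⟩
    have hinner : ⟪u', v'⟫ = ‖u‖⁻¹ * (‖v‖⁻¹ * ⟪u, v⟫) := by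
      rw [hu', hv', real_inner_smul_left, real_inner_smul_right]
    have heq : |⟪u, v⟫| = ‖u‖ * ‖v‖ * |⟪u', v'⟫| := by
      rw [hinner, abs_mul, abs_mul, abs_of_pos (inv_pos.2 hna), abs_of_pos (inv_pos.2 hnb)]
      field_simp
    have hB0 : 0 ≤ B := le_trans (abs_nonneg _) habs
    calc |⟪u, v⟫| = ‖u‖ * ‖v‖ * |⟪u', v'⟫| := heq
    _ ≤ 1 * 1 * B := by
        apply mul_le_mul ?_ habs (abs_nonneg _) (by norm_num)
        nlinarith
    _ = B := by ring
    _ ≤ max 0 B := le_max_right _ _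
  calc friedrichsCos U V ≤ max 0 B := hfin
  _ < 1 := max_lt one_pos hBlt

end lt1

theorem composition_bam_rate_r
    {H : Type*} [NormedAddCommGroup H] [InnerProductSpace ℝ H] [CompleteSpace H]
    (U₁ U₂ : Submodule ℝ H)
    (hU₁ : IsClosed (U₁ : Set H)) (hU₂ : IsClosed (U₂ : Set H))
    (hsum : IsClosed ((U₁ : Set H) + (U₂ : Set H)))
    (G₁ G₂ : H → H) (γ₁ γ₂ : ℝ)
    (hγ₁0 : 0 ≤ γ₁) (hγ₁1 : γ₁ < 1) (hγ₂0 : 0 ≤ γ₂) (hγ₂1 : γ₂ < 1)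
    (hFix₁ : Function.fixedPoints G₁ = (U₁ : Set H))
    (hFix₂ : Function.fixedPoints G₂ = (U₂ : Set H))
    (P₁ P₂ P₁₂ : H → H)
    (hP₁ : IsProjOn (U₁ : Set H) P₁) (hP₂ : IsProjOn (U₂ : Set H) P₂)
    (hP₁₂ : IsProjOn ((U₁ ⊓ U₂ : Submodule ℝ H) : Set H) P₁₂)
    (hPG₁ : ∀ x, P₁ (G₁ x) = P₁ x) (hPG₂ : ∀ x, P₂ (G₂ x) = P₂ x)
    (hineq₁ : ∀ x, ‖G₁ x - P₁ x‖ ≤ γ₁ * ‖x - P₁ x‖)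
    (hineq₂ : ∀ x, ‖G₂ x - P₂ x‖ ≤ γ₂ * ‖x - P₂ x‖)
    (cF r : ℝ) (hcF : cF = friedrichsCos U₁ U₂)
    (hr : r = max (Real.sqrt (γ₁ ^ 2 + (1 - γ₁ ^ 2) * ((1 + cF) / 2)))
                  (Real.sqrt (γ₂ ^ 2 + (1 - γ₂ ^ 2) * ((1 + cF) / 2)))) :
    max γ₁ γ₂ ≤ r ∧ r < 1 ∧
    ∀ x, ‖G₂ (G₁ x) - P₁₂ x‖ ≤ r * ‖x - P₁₂ x‖ := by
  have hcF0 : 0 ≤ cF := hcF ▸ friedrichsCos_nonneg U₁ U₂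
  have hcF1 : cF < 1 := hcF ▸ friedrichsCos_lt_one U₁ U₂ hU₁ hU₂ hsum
  have ha1 : (0:ℝ) ≤ ((1-γ₁)*(1+γ₁)) * ((1+cF)/2) :=
    mul_nonneg (mul_nonneg (by linarith) (by linarith)) (by linarith)
  have ha2 : (0:ℝ) ≤ ((1-γ₂)*(1+γ₂)) * ((1+cF)/2) :=
    mul_nonneg (mul_nonneg (by linarith) (by linarith)) (by linarith)
  have hb1 : (0:ℝ) < ((1-γ₁)*(1+γ₁)) * (1 - (1+cF)/2) :=
    mul_pos (mul_pos (by linarith) (by linarith)) (by linarith)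
  have hb2 : (0:ℝ) < ((1-γ₂)*(1+γ₂)) * (1 - (1+cF)/2) :=
    mul_pos (mul_pos (by linarith) (by linarith)) (by linarith)
  have hI1nn : (0:ℝ) ≤ γ₁ ^ 2 + (1 - γ₁ ^ 2) * ((1 + cF) / 2) := by
    linarith [ha1, sq_nonneg γ₁]
  have hI2nn : (0:ℝ) ≤ γ₂ ^ 2 + (1 - γ₂ ^ 2) * ((1 + cF) / 2) := by
    linarith [ha2, sq_nonneg γ₂]
  have hr0 : 0 ≤ r := hr ▸ le_trans (Real.sqrt_nonneg _) (le_max_left _ _)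
  have hr1 : γ₁ ^ 2 + (1 - γ₁ ^ 2) * ((1 + cF) / 2) ≤ r ^ 2 := by
    have h1 : Real.sqrt (γ₁ ^ 2 + (1 - γ₁ ^ 2) * ((1 + cF) / 2)) ≤ r := hr ▸ le_max_left _ _
    have h2 := pow_le_pow_left₀ (Real.sqrt_nonneg _) h1 2
    rwa [Real.sq_sqrt hI1nn] at h2
  have hr2 : γ₂ ^ 2 + (1 - γ₂ ^ 2) * ((1 + cF) / 2) ≤ r ^ 2 := by
    have h1 : Real.sqrt (γ₂ ^ 2 + (1 - γ₂ ^ 2) * ((1 + cF) / 2)) ≤ r := hr ▸ le_max_right _ _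
    have h2 := pow_le_pow_left₀ (Real.sqrt_nonneg _) h1 2
    rwa [Real.sq_sqrt hI2nn] at h2
  refine ⟨?_, ?_, ?_⟩
  · -- max γ₁ γ₂ ≤ r
    apply max_le
    · have : γ₁ ^ 2 ≤ r ^ 2 := by linarith [ha1, hr1]
      exact le_of_pow_le_pow_left₀ two_ne_zero hr0 this
    · have : γ₂ ^ 2 ≤ r ^ 2 := by linarith [ha2, hr2]
      exact le_of_pow_le_pow_left₀ two_ne_zero hr0 this
  · -- r < 1
    rw [hr]
    apply max_lt
    · have h1 : γ₁ ^ 2 + (1 - γ₁ ^ 2) * ((1 + cF) / 2) < 1 := by linarith [hb1]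
      calc Real.sqrt (γ₁ ^ 2 + (1 - γ₁ ^ 2) * ((1 + cF) / 2)) < Real.sqrt 1 :=
            Real.sqrt_lt_sqrt hI1nn h1
      _ = 1 := Real.sqrt_one
    · have h1 : γ₂ ^ 2 + (1 - γ₂ ^ 2) * ((1 + cF) / 2) < 1 := by linarith [hb2]
      calc Real.sqrt (γ₂ ^ 2 + (1 - γ₂ ^ 2) * ((1 + cF) / 2)) < Real.sqrt 1 :=
            Real.sqrt_lt_sqrt hI2nn h1
      _ = 1 := Real.sqrt_one
  · -- main estimate
    intro x
    set p := P₁₂ x with hp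
    set y := G₁ x with hy
    set z := G₂ y with hz
    have hpmem : p ∈ U₁ ⊓ U₂ := (hP₁₂ x).1
    have hp1 : p ∈ U₁ := hpmem.1
    have hp2 : p ∈ U₂ := hpmem.2
    have hPy : P₁ y = P₁ x := hPG₁ x
    have hP1xm : P₁ x ∈ U₁ := (hP₁ x).1
    have hP2ym : P₂ y ∈ U₂ := (hP₂ y).1
    have hd : ∀ v ∈ U₁, ⟪x - P₁ x, v⟫ = 0 := fun v hv => isProjOn_inner_eq_zero_s13 hP₁ x hv
    have hbp : ∀ v ∈ U₁, ⟪y - P₁ x, v⟫ = 0 := fun v hv => by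
      have h := isProjOn_inner_eq_zero_s13 hP₁ y hv
      rwa [hPy] at h
    have hxpp : ∀ v ∈ U₁ ⊓ U₂, ⟪x - p, v⟫ = 0 := fun v hv =>
      isProjOn_inner_eq_zero_s13 hP₁₂ x hv
    have haU1 : P₁ x - p ∈ U₁ := U₁.sub_mem hP1xm hp1
    have ha_perp : ∀ v ∈ U₁ ⊓ U₂, ⟪P₁ x - p, v⟫ = 0 := fun v hv => by
      have e : ⟪x - p, v⟫ - ⟪x - P₁ x, v⟫ = ⟪P₁ x - p, v⟫ := by
        rw [← inner_sub_left]; congr 1; abel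
      rw [← e, hxpp v hv, hd v hv.1]; ring
    have hyp_perp : ∀ v ∈ U₁ ⊓ U₂, ⟪y - p, v⟫ = 0 := fun v hv => by
      have e : ⟪y - P₁ x, v⟫ + ⟪P₁ x - p, v⟫ = ⟪y - p, v⟫ := by
        rw [← inner_add_left]; congr 1; abel
      rw [← e, hbp v hv.1, ha_perp v hv]; ring
    have hyP2 : ∀ v ∈ U₂, ⟪y - P₂ y, v⟫ = 0 := fun v hv => isProjOn_inner_eq_zero_s13 hP₂ y hv
    set w := P₂ y - p with hwdef
    have hw_mem : w ∈ U₂ := U₂.sub_mem hP2ym hp2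
    have hw_perp : ∀ v ∈ U₁ ⊓ U₂, ⟪w, v⟫ = 0 := fun v hv => by
      have e : ⟪y - p, v⟫ - ⟪y - P₂ y, v⟫ = ⟪w, v⟫ := by
        rw [← inner_sub_left]; congr 1; rw [hwdef]; abel
      rw [← e, hyp_perp v hv, hyP2 v hv.2]; ring
    set w' := P₁ w with hw'def
    have hw'U1 : w' ∈ U₁ := (hP₁ w).1
    have he : ∀ v ∈ U₁, ⟪w - w', v⟫ = 0 := fun v hv => isProjOn_inner_eq_zero_s13 hP₁ w hv
    have hw'_perp : ∀ v ∈ U₁ ⊓ U₂, ⟪w', v⟫ = 0 := fun v hv => by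
      have e : ⟪w, v⟫ - ⟪w - w', v⟫ = ⟪w', v⟫ := by
        rw [← inner_sub_left]; congr 1; abel
      rw [← e, hw_perp v hv, he v hv.1]; ring
    -- scalar quantities
    set α := ‖P₁ x - p‖ with hα
    set ξ := ‖x - P₁ x‖ with hξ
    set β := ‖y - P₁ x‖ with hβ
    set u := ‖w‖ with hu
    set q := ‖w'‖ with hq
    set m := ‖w - w'‖ with hm
    -- Friedrichs bound
    have hw'W1 : w' ∈ U₁ ⊓ (U₁ ⊓ U₂)ᗮ := by
      refine Submodule.mem_inf.2 ⟨hw'U1, (Submodule.mem_orthogonal _ _).2 fun v hv => ?_⟩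
      rw [real_inner_comm]; exact hw'_perp v hv
    have hwW2 : w ∈ U₂ ⊓ (U₁ ⊓ U₂)ᗮ := by
      refine Submodule.mem_inf.2 ⟨hw_mem, (Submodule.mem_orthogonal _ _).2 fun v hv => ?_⟩
      rw [real_inner_comm]; exact hw_perp v hv
    have hfr : |⟪w', w⟫| ≤ friedrichsCos U₁ U₂ * (q * u) :=
      friedrichsCos_bound U₁ U₂ hw'W1 hwW2
    rw [← hcF] at hfr
    have hq2 : ⟪w', w⟫ = q^2 := by
      have e : ⟪w', w'⟫ + ⟪w', w - w'⟫ = ⟪w', w⟫ := by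
        rw [← inner_add_right]; congr 1; abel
      have e2 : ⟪w', w - w'⟫ = 0 := by rw [real_inner_comm]; exact he w' hw'U1
      rw [← e, e2, real_inner_self_eq_norm_sq]; ring
    have hqcu : q ≤ cF * u := by
      have hqnn : (0:ℝ) ≤ q := norm_nonneg _
      rcases hqnn.eq_or_lt with hq0 | hq0
      · rw [← hq0]
        exact mul_nonneg hcF0 (norm_nonneg _)
      · have h1 : q^2 ≤ cF * (q * u) := by
          rw [← hq2]
          exact le_trans (le_abs_self _) hfr
        have h2 : q * q ≤ q * (cF * u) := by linarith [h1]
        exact le_of_mul_le_mul_left h2 hq0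
    have hpyth : m^2 + q^2 = u^2 := by
      have e0 : w' + (w - w') = w := by abel
      have e2 : ⟪w', w - w'⟫ = 0 := by rw [real_inner_comm]; exact he w' hw'U1
      have : u^2 = ‖w' + (w - w')‖^2 := by rw [e0]
      rw [this, norm_add_sq_real, e2]
      ring
    have huab : u^2 ≤ α*q + β*m := by
      have ew : ⟪y - p, w⟫ - ⟪y - P₂ y, w⟫ = ⟪w, w⟫ := by
        rw [← inner_sub_left]; congr 1; rw [hwdef]; abel
      have h1 : ⟪w, w⟫ = ⟪y - p, w⟫ := by rw [← ew, hyP2 w hw_mem]; ring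
      have h2 : ⟪y - P₁ x, w⟫ + ⟪P₁ x - p, w⟫ = ⟪y - p, w⟫ := by
        rw [← inner_add_left]; congr 1; abel
      have h3 : ⟪P₁ x - p, w - w'⟫ = 0 := by rw [real_inner_comm]; exact he _ haU1
      have h4 : ⟪P₁ x - p, w'⟫ + ⟪P₁ x - p, w - w'⟫ = ⟪P₁ x - p, w⟫ := by
        rw [← inner_add_right]; congr 1; abel
      have h5 : ⟪P₁ x - p, w⟫ ≤ α*q := by
        rw [← h4, h3]
        have := real_inner_le_norm (P₁ x - p) w'
        linarith
      have h6 : ⟪y - P₁ x, w'⟫ = 0 := hbp w' hw'U1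
      have h7 : ⟪y - P₁ x, w'⟫ + ⟪y - P₁ x, w - w'⟫ = ⟪y - P₁ x, w⟫ := by
        rw [← inner_add_right]; congr 1; abel
      have h8 : ⟪y - P₁ x, w⟫ ≤ β*m := by
        rw [← h7, h6]
        have := real_inner_le_norm (y - P₁ x) (w - w')
        linarith
      have h9 : u^2 = ⟪w, w⟫ := (real_inner_self_eq_norm_sq w).symm
      linarith
    have hβξ : β ≤ γ₁ * ξ := hineq₁ x
    have hxpnorm : ‖x - p‖^2 = α^2 + ξ^2 := by
      have e0 : (x - P₁ x) + (P₁ x - p) = x - p := by abel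
      have e2 : ⟪x - P₁ x, P₁ x - p⟫ = 0 := hd _ haU1
      rw [← e0, norm_add_sq_real, e2]
      ring
    have hypnorm : ‖y - p‖^2 = α^2 + β^2 := by
      have e0 : (y - P₁ x) + (P₁ x - p) = y - p := by abel
      have e2 : ⟪y - P₁ x, P₁ x - p⟫ = 0 := hbp _ haU1
      rw [← e0, norm_add_sq_real, e2]
      ring
    have hyP2norm : ‖y - p‖^2 = ‖y - P₂ y‖^2 + u^2 := by
      have e0 : (y - P₂ y) + w = y - p := by rw [hwdef]; abel
      have e2 : ⟪y - P₂ y, w⟫ = 0 := hyP2 w hw_mem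
      rw [← e0, norm_add_sq_real, e2]
      ring
    have hzP2 : ∀ v ∈ U₂, ⟪z - P₂ y, v⟫ = 0 := fun v hv => by
      have h := isProjOn_inner_eq_zero_s13 hP₂ z hv
      rw [hz] at h ⊢
      rwa [hPG₂ y] at h
    have hzpnorm : ‖z - p‖^2 = ‖z - P₂ y‖^2 + u^2 := by
      have e0 : (z - P₂ y) + w = z - p := by rw [hwdef]; abel
      have e2 : ⟪z - P₂ y, w⟫ = 0 := hzP2 w hw_mem
      rw [← e0, norm_add_sq_real, e2]
      ring
    have hzle : ‖z - P₂ y‖ ≤ γ₂ * ‖y - P₂ y‖ := hineq₂ y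
    have hz2 : ‖z - P₂ y‖^2 ≤ γ₂^2 * ‖y - P₂ y‖^2 := by
      have h := pow_le_pow_left₀ (norm_nonneg _) hzle 2
      calc ‖z - P₂ y‖^2 ≤ (γ₂ * ‖y - P₂ y‖)^2 := h
      _ = γ₂^2 * ‖y - P₂ y‖^2 := by ring
    have hσnn : (0:ℝ) ≤ 1 - cF^2 := by
      have := mul_nonneg (by linarith : (0:ℝ) ≤ 1-cF) (by linarith : (0:ℝ) ≤ 1+cF)
      linarith [this]
    have hσ : (Real.sqrt (1 - cF^2))^2 = 1 - cF^2 := Real.sq_sqrt hσnn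
    have main := scalar_main cF γ₁ γ₂ (Real.sqrt (1 - cF^2)) α β ξ u q m r
      hcF0 hcF1 hγ₁0 hγ₁1 hγ₂0 hγ₂1 (Real.sqrt_nonneg _) hσ
      (norm_nonneg _) (norm_nonneg _) (norm_nonneg _) (norm_nonneg _) (norm_nonneg _)
      (norm_nonneg _) hqcu (le_of_eq hpyth) huab hβξ
      (by linarith [hr1] : γ₁^2 + (1-γ₁^2)*((1+cF)/2) ≤ r^2)
      (by linarith [hr2] : γ₂^2 + (1-γ₂^2)*((1+cF)/2) ≤ r^2)
    have hfinal2 : ‖z - p‖^2 ≤ (r * ‖x - p‖)^2 := by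
      have e : (r * ‖x - p‖)^2 = r^2 * ‖x - p‖^2 := by ring
      have eA : ‖y - P₂ y‖^2 = α^2 + β^2 - u^2 := by linarith [hyP2norm, hypnorm]
      have eB : γ₂^2 * ‖y - P₂ y‖^2 = γ₂^2*(α^2+β^2) - γ₂^2*u^2 := by rw [eA]; ring
      rw [e, hxpnorm]
      linarith [main, hzpnorm, hz2, eB]
    exact le_of_pow_le_pow_left₀ two_ne_zero (mul_nonneg hr0 (norm_nonneg _)) hfinal2
end

section
/- Let U₁ and U₂ be closed linear subspaces of H with U₁ + U₂ closed, let c_F be the cosine of the Friedrichs angle between U₁ and U₂, let G₁ be a γ₁-BAM with Fix G₁ = U₁ and G₂ a γ₂-BAM with Fix G₂ = U₂. Set s := √(γ₁² + γ₂² − γ₁²γ₂² + (1−γ₁²)(1−γ₂²)(1+c_F)²/4). Then s ∈ [max{γ₁, γ₂, 1/2}, 1), and for all x ∈ H, ‖G₂ G₁ x − P_{U₁∩U₂} x‖ ≤ s ‖x − P_{U₁∩U₂} x‖; in particular G₂ ∘ G₁ is an s-BAM with Fix(G₂∘G₁) = U₁ ∩ U₂. -/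
open Function
open scoped RealInnerProductSpace Pointwise

section Aux

variable {H : Type*} [NormedAddCommGroup H] [InnerProductSpace ℝ H]

lemma IsProjOn.eq_proj [CompleteSpace H] (K : Submodule ℝ H) [K.HasOrthogonalProjection]
    {P : H → H} (h : IsProjOn (K : Set H) P) (x : H) : P x = Submodule.orthogonalProjectionOnto K x := by
  have hmem := (h x).1
  have hinf : ‖x - P x‖ = ⨅ w : (K : Set H), ‖x - w‖ := by
    apply le_antisymm
    · exact le_ciInf fun w => (h x).2 w w.2
    · exact ciInf_le ⟨0, by rintro r ⟨w, rfl⟩; exact norm_nonneg _⟩ (⟨P x, hmem⟩ : (K : Set H))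
  have hz := (Submodule.norm_eq_iInf_iff_real_inner_eq_zero K hmem).1 hinf
  exact (Submodule.eq_starProjection_of_mem_of_inner_eq_zero hmem hz).symm

lemma bessel_two (u e z : H) (hu : ‖u‖ = 1) (he : ‖e‖ = 1) (hue : ⟪u, e⟫ = 0) :
    ⟪u, z⟫ ^ 2 + ⟪e, z⟫ ^ 2 ≤ ‖z‖ ^ 2 := by
  have hue' : ⟪e, u⟫ = 0 := by rw [real_inner_comm]; exact hue
  have h0 : (0:ℝ) ≤ ‖z - ⟪u, z⟫ • u - ⟪e, z⟫ • e‖ ^ 2 := sq_nonneg _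
  have hexp : ‖z - ⟪u, z⟫ • u - ⟪e, z⟫ • e‖ ^ 2
      = ‖z‖ ^ 2 - ⟪u, z⟫ ^ 2 - ⟪e, z⟫ ^ 2 := by
    have h1' : ⟪u, u⟫ = 1 := by rw [real_inner_self_eq_norm_sq, hu]; norm_num
    have h2' : ⟪e, e⟫ = 1 := by rw [real_inner_self_eq_norm_sq, he]; norm_num
    rw [← real_inner_self_eq_norm_sq, ← real_inner_self_eq_norm_sq]
    simp only [inner_sub_left, inner_sub_right, real_inner_smul_left, real_inner_smul_right,
      hue, hue', h1', h2']
    rw [real_inner_comm z u, real_inner_comm z e]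
    ring
  nlinarith [h0, hexp]

lemma fc_set_le_one (U V : Submodule ℝ H) :
    ∀ r ∈ {r : ℝ | ∃ u ∈ U ⊓ (U ⊓ V)ᗮ, ∃ v ∈ V ⊓ (U ⊓ V)ᗮ,
      ‖u‖ ≤ 1 ∧ ‖v‖ ≤ 1 ∧ r = |⟪u, v⟫|}, r ≤ 1 := by
  rintro r ⟨u, hu, v, hv, h1, h2, rfl⟩
  calc |⟪u, v⟫| ≤ ‖u‖ * ‖v‖ := abs_real_inner_le_norm _ _
    _ ≤ 1 := by nlinarith [norm_nonneg u, norm_nonneg v]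

lemma fc_bddAbove (U V : Submodule ℝ H) :
    BddAbove {r : ℝ | ∃ u ∈ U ⊓ (U ⊓ V)ᗮ, ∃ v ∈ V ⊓ (U ⊓ V)ᗮ,
      ‖u‖ ≤ 1 ∧ ‖v‖ ≤ 1 ∧ r = |⟪u, v⟫|} :=
  ⟨1, fun r hr => fc_set_le_one U V r hr⟩

lemma fc_nonneg (U V : Submodule ℝ H) : 0 ≤ friedrichsCos U V := by
  apply le_csSup (fc_bddAbove U V)
  exact ⟨0, Submodule.zero_mem _, 0, Submodule.zero_mem _, by simp⟩

lemma fc_le_one (U V : Submodule ℝ H) : friedrichsCos U V ≤ 1 :=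
  Real.sSup_le (fc_set_le_one U V) zero_le_one

lemma abs_inner_le_fc (U V : Submodule ℝ H) {u v : H}
    (hu : u ∈ U ⊓ (U ⊓ V)ᗮ) (hv : v ∈ V ⊓ (U ⊓ V)ᗮ) :
    |⟪u, v⟫| ≤ friedrichsCos U V * (‖u‖ * ‖v‖) := by
  rcases eq_or_ne u 0 with rfl | hu0
  · simp [fc_nonneg U V]
  rcases eq_or_ne v 0 with rfl | hv0
  · simp
  have hnu : (0:ℝ) < ‖u‖ := norm_pos_iff.2 hu0
  have hnv : (0:ℝ) < ‖v‖ := norm_pos_iff.2 hv0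
  set u' : H := (‖u‖⁻¹ : ℝ) • u with hu'
  set v' : H := (‖v‖⁻¹ : ℝ) • v with hv'
  have hu'n : ‖u'‖ = 1 := norm_smul_inv_norm hu0
  have hv'n : ‖v'‖ = 1 := norm_smul_inv_norm hv0
  have hmem : |⟪u', v'⟫| ∈ {r : ℝ | ∃ u ∈ U ⊓ (U ⊓ V)ᗮ, ∃ v ∈ V ⊓ (U ⊓ V)ᗮ,
      ‖u‖ ≤ 1 ∧ ‖v‖ ≤ 1 ∧ r = |⟪u, v⟫|} :=
    ⟨u', Submodule.smul_mem _ _ hu, v', Submodule.smul_mem _ _ hv,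
      le_of_eq hu'n, le_of_eq hv'n, rfl⟩
  have hle : |⟪u', v'⟫| ≤ friedrichsCos U V := le_csSup (fc_bddAbove U V) hmem
  have hiv : ⟪u', v'⟫ = ‖u‖⁻¹ * (‖v‖⁻¹ * ⟪u, v⟫) := by
    rw [hu', hv', real_inner_smul_left, real_inner_smul_right]
  rw [hiv] at hle
  rw [abs_mul, abs_mul, abs_of_pos (inv_pos.2 hnu), abs_of_pos (inv_pos.2 hnv)] at hle
  calc |⟪u, v⟫| = ‖u‖ * ‖v‖ * (‖u‖⁻¹ * (‖v‖⁻¹ * |⟪u, v⟫|)) := by field_simp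
    _ ≤ ‖u‖ * ‖v‖ * friedrichsCos U V := by
        apply mul_le_mul_of_nonneg_left hle (by positivity)
    _ = friedrichsCos U V * (‖u‖ * ‖v‖) := by ring

lemma fc_lt_one [CompleteSpace H] (U V : Submodule ℝ H)
    (hU : IsClosed (U : Set H)) (hV : IsClosed (V : Set H))
    (hsum : IsClosed ((U : Set H) + (V : Set H))) : friedrichsCos U V < 1 := by
  set M := U ⊓ V with hM
  set A := U ⊓ Mᗮ with hA
  set B := V ⊓ Mᗮ with hB
  have hMc : IsClosed (M : Set H) := by
    rw [hM, Submodule.coe_inf]; exact hU.inter hV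
  haveI : CompleteSpace M := hMc.completeSpace_coe
  have hAc : IsClosed (A : Set H) := by
    rw [hA, Submodule.coe_inf]; exact hU.inter M.isClosed_orthogonal
  have hBc : IsClosed (B : Set H) := by
    rw [hB, Submodule.coe_inf]; exact hV.inter M.isClosed_orthogonal
  haveI : CompleteSpace A := hAc.completeSpace_coe
  haveI : CompleteSpace B := hBc.completeSpace_coe
  have hABset : ((A ⊔ B : Submodule ℝ H) : Set H)
      = ((U : Set H) + (V : Set H)) ∩ (Mᗮ : Set H) := by
    rw [Submodule.coe_sup]
    apply Set.Subset.antisymm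
    · rintro x ⟨a, ha, b, hb, rfl⟩
      exact ⟨⟨a, ha.1, b, hb.1, rfl⟩, Mᗮ.add_mem ha.2 hb.2⟩
    · rintro x ⟨⟨u, hu, v, hv, rfl⟩, hx⟩
      have hπ : ((Submodule.orthogonalProjectionOnto M (u + v) : M) : H) = 0 := by
        rw [Submodule.orthogonalProjectionOnto_apply_of_mem_orthogonal hx]
        simp
      have hπadd : ((Submodule.orthogonalProjectionOnto M u : M) : H)
          + ((Submodule.orthogonalProjectionOnto M v : M) : H) = 0 := by
        rw [← hπ, ← Submodule.coe_add, ← map_add]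
      refine ⟨u - (Submodule.orthogonalProjectionOnto M u : H),
        ⟨Submodule.sub_mem U hu (inf_le_left (b := V) (Submodule.orthogonalProjectionOnto M u).2),
          Submodule.sub_starProjection_mem_orthogonal u⟩,
        v - (Submodule.orthogonalProjectionOnto M v : H),
        ⟨Submodule.sub_mem V hv (inf_le_right (a := U) (Submodule.orthogonalProjectionOnto M v).2),
          Submodule.sub_starProjection_mem_orthogonal v⟩, ?_⟩
      show u - (Submodule.orthogonalProjectionOnto M u : H) + (v - (Submodule.orthogonalProjectionOnto M v : H)) = u + v
      have h2 : u - (Submodule.orthogonalProjectionOnto M u : H) + (v - (Submodule.orthogonalProjectionOnto M v : H))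
          = u + v - (((Submodule.orthogonalProjectionOnto M u : M) : H)
              + ((Submodule.orthogonalProjectionOnto M v : M) : H)) := by abel
      rw [h2, hπadd, sub_zero]
  have hABclosed : IsClosed ((A ⊔ B : Submodule ℝ H) : Set H) := by
    rw [hABset]; exact hsum.inter M.isClosed_orthogonal
  haveI : CompleteSpace (A ⊔ B : Submodule ℝ H) := hABclosed.completeSpace_coe
  let L : (A × B) →L[ℝ] H :=
    A.subtypeL.comp (ContinuousLinearMap.fst ℝ A B)
      + B.subtypeL.comp (ContinuousLinearMap.snd ℝ A B)
  have hLapp : ∀ p : A × B, L p = (p.1 : H) + (p.2 : H) := fun p => rfl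
  have hLmem : ∀ p : A × B, L p ∈ A ⊔ B := fun p =>
    Submodule.mem_sup.2 ⟨p.1, p.1.2, p.2, p.2.2, by rw [hLapp]⟩
  let L' : (A × B) →L[ℝ] (A ⊔ B : Submodule ℝ H) := L.codRestrict _ hLmem
  have hker : LinearMap.ker (L' : (A × B) →ₗ[ℝ] (A ⊔ B : Submodule ℝ H)) = ⊥ := by
    rw [LinearMap.ker_eq_bot']
    intro p hp
    have h0 : (p.1 : H) + (p.2 : H) = 0 := by
      have : ((L' p : (A ⊔ B : Submodule ℝ H)) : H) = 0 := congrArg Subtype.val hp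
      rwa [ContinuousLinearMap.coe_codRestrict_apply, hLapp] at this
    have hp1 : (p.1 : H) ∈ M ⊓ Mᗮ := by
      constructor
      · have hmB : (p.1 : H) = -(p.2 : H) := eq_neg_of_add_eq_zero_left h0
        exact ⟨p.1.2.1, by rw [hmB]; exact V.neg_mem p.2.2.1⟩
      · exact p.1.2.2
    have h1 : (p.1 : H) = 0 := by
      have := hp1.2 _ hp1.1
      rwa [inner_self_eq_zero (𝕜 := ℝ)] at this
    have h2 : (p.2 : H) = 0 := by rw [h1, zero_add] at h0; exact h0
    exact Prod.ext (Subtype.ext h1) (Subtype.ext h2)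
  have hrange : LinearMap.range (L' : (A × B) →ₗ[ℝ] (A ⊔ B : Submodule ℝ H)) = ⊤ := by
    rw [LinearMap.range_eq_top]
    rintro ⟨y, hy⟩
    obtain ⟨a, ha, b, hb, rfl⟩ := Submodule.mem_sup.1 hy
    exact ⟨(⟨a, ha⟩, ⟨b, hb⟩),
      Subtype.ext (by
        show ((L' (⟨a, ha⟩, ⟨b, hb⟩) : (A ⊔ B : Submodule ℝ H)) : H) = a + b
        rw [ContinuousLinearMap.coe_codRestrict_apply, hLapp])⟩
  let e := ContinuousLinearEquiv.ofBijective L' hker hrange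
  set C : ℝ := max ‖(e.symm : (A ⊔ B : Submodule ℝ H) →L[ℝ] A × B)‖ 1 with hC
  have hC1 : (1:ℝ) ≤ C := le_max_right _ _
  have hC0 : (0:ℝ) < C := lt_of_lt_of_le one_pos hC1
  have hkey : ∀ a ∈ A, ∀ b ∈ B, ‖a‖ = 1 → ‖b‖ = 1 → ⟪a, b⟫ ≤ 1 - 1 / (2 * C ^ 2) := by
    intro a haA b hbB hna hnb
    set pa : A := ⟨a, haA⟩
    set pb : B := ⟨-b, B.neg_mem hbB⟩
    have hyval : ((L' (pa, pb) : (A ⊔ B : Submodule ℝ H)) : H) = a - b := by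
      rw [ContinuousLinearMap.coe_codRestrict_apply, hLapp]
      show a + -b = a - b
      abel
    have hsymm : e.symm (L' (pa, pb)) = (pa, pb) := e.symm_apply_apply (pa, pb)
    have hnorm1 : ‖(pa, pb)‖ = 1 := by
      have h1 : ‖pa‖ = 1 := hna
      have h2 : ‖pb‖ = 1 := by
        show ‖-b‖ = 1
        rwa [norm_neg]
      rw [Prod.norm_def, h1, h2]
      exact max_self 1
    have hbound : (1:ℝ) ≤ C * ‖a - b‖ := by
      have h3 : ‖e.symm (L' (pa, pb))‖
          ≤ ‖(e.symm : (A ⊔ B : Submodule ℝ H) →L[ℝ] A × B)‖ * ‖L' (pa, pb)‖ :=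
        (e.symm : (A ⊔ B : Submodule ℝ H) →L[ℝ] A × B).le_opNorm _
      have h4 : ‖L' (pa, pb)‖ = ‖a - b‖ := by
        rw [← hyval]; rfl
      rw [hsymm, hnorm1, h4] at h3
      calc (1:ℝ) ≤ ‖(e.symm : (A ⊔ B : Submodule ℝ H) →L[ℝ] A × B)‖ * ‖a - b‖ := h3
        _ ≤ C * ‖a - b‖ := by
            apply mul_le_mul_of_nonneg_right (le_max_left _ _) (norm_nonneg _)
    have hsq : ‖a - b‖ ^ 2 = 2 - 2 * ⟪a, b⟫ := by
      rw [norm_sub_sq_real, hna, hnb]; ring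
    have h5 : (1:ℝ) ≤ C ^ 2 * (2 - 2 * ⟪a, b⟫) := by
      nlinarith [mul_le_mul hbound hbound one_pos.le (by positivity : (0:ℝ) ≤ C * ‖a - b‖)]
    have h6 : 1 / (2 * C ^ 2) ≤ 1 - ⟪a, b⟫ := by
      rw [div_le_iff₀ (by positivity)]
      nlinarith
    linarith
  set c₀ : ℝ := 1 - 1 / (2 * C ^ 2) with hc₀
  have hc₀0 : 0 ≤ c₀ := by
    rw [hc₀]
    have h2C : (2:ℝ) ≤ 2 * C ^ 2 := by nlinarith
    have := one_div_le_one_div_of_le (by norm_num : (0:ℝ) < 2) h2C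
    linarith
  have hc₀1 : c₀ < 1 := by
    rw [hc₀]
    have : 0 < 1 / (2 * C ^ 2) := by positivity
    linarith
  refine lt_of_le_of_lt (Real.sSup_le ?_ hc₀0) hc₀1
  rintro r ⟨u, hu, v, hv, hnu, hnv, rfl⟩
  rcases eq_or_ne u 0 with rfl | hu0
  · simpa using hc₀0
  rcases eq_or_ne v 0 with rfl | hv0
  · simpa using hc₀0
  have hpu : (0:ℝ) < ‖u‖ := norm_pos_iff.2 hu0
  have hpv : (0:ℝ) < ‖v‖ := norm_pos_iff.2 hv0
  set u' : H := (‖u‖⁻¹ : ℝ) • u with hu'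
  set v' : H := (‖v‖⁻¹ : ℝ) • v with hv'
  have hu'A : u' ∈ A := A.smul_mem _ hu
  have hv'B : v' ∈ B := B.smul_mem _ hv
  have hu'n : ‖u'‖ = 1 := norm_smul_inv_norm hu0
  have hv'n : ‖v'‖ = 1 := norm_smul_inv_norm hv0
  have k1 : ⟪u', v'⟫ ≤ c₀ := hkey u' hu'A v' hv'B hu'n hv'n
  have k2 : ⟪u', -v'⟫ ≤ c₀ := by
    refine hkey u' hu'A (-v') (B.neg_mem hv'B) hu'n ?_
    rw [norm_neg]; exact hv'n
  rw [inner_neg_right] at k2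
  have habs : |⟪u', v'⟫| ≤ c₀ := abs_le.2 ⟨by linarith, k1⟩
  have hiv : ⟪u', v'⟫ = ‖u‖⁻¹ * (‖v‖⁻¹ * ⟪u, v⟫) := by
    rw [hu', hv', real_inner_smul_left, real_inner_smul_right]
  calc |⟪u, v⟫| = ‖u‖ * ‖v‖ * |⟪u', v'⟫| := by
        rw [hiv, abs_mul, abs_mul, abs_of_pos (inv_pos.2 hpu), abs_of_pos (inv_pos.2 hpv)]
        field_simp
    _ ≤ 1 * 1 * c₀ := by
        apply mul_le_mul _ habs (abs_nonneg _) (by norm_num)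
        nlinarith
    _ = c₀ := by ring

-- pure real arithmetic helpers
lemma rK_facts (cF γ₁ : ℝ) (hcF0 : 0 ≤ cF) (hcF1 : cF ≤ 1) (hγ0 : 0 ≤ γ₁) (hγ1 : γ₁ ≤ 1) :
    0 ≤ γ₁ ^ 2 + (1 - γ₁ ^ 2) * ((1 + cF) ^ 2 / 4)
    ∧ cF ^ 2 ≤ γ₁ ^ 2 + (1 - γ₁ ^ 2) * ((1 + cF) ^ 2 / 4)
    ∧ γ₁ ^ 2 ≤ γ₁ ^ 2 + (1 - γ₁ ^ 2) * ((1 + cF) ^ 2 / 4) := by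
  have h1 : (0:ℝ) ≤ 1 - γ₁ ^ 2 := by nlinarith
  have h2 : (0:ℝ) ≤ (1 + cF) ^ 2 / 4 := by positivity
  have h3 : cF ^ 2 ≤ (1 + cF) ^ 2 / 4 := by nlinarith
  have h4 : (1 + cF) ^ 2 / 4 ≤ 1 := by nlinarith
  refine ⟨by nlinarith [mul_nonneg h1 h2], ?_, by nlinarith [mul_nonneg h1 h2]⟩
  nlinarith [mul_nonneg (sq_nonneg γ₁) (sub_nonneg.2 h4), mul_nonneg h1 h2]

lemma r_collapse (sv n : ℝ) (hn : 0 ≤ n) (h : n ≤ sv * n) (hsv : sv < 1) : n = 0 := by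
  by_contra h0
  have hp : 0 < n := hn.lt_of_ne (Ne.symm h0)
  nlinarith [mul_lt_mul_of_pos_right hsv hp]

lemma r_smallcase (c α ζ : ℝ) (hζ : 0 < ζ)
    (h : ζ ^ 2 ≤ c * (α * ζ)) : ζ ^ 2 ≤ c ^ 2 * α ^ 2 := by
  have h2 : ζ ≤ c * α := by nlinarith
  nlinarith

lemma r_main (cF γ₁ ω α ζ c₁ c₂ : ℝ) (hcF0 : 0 ≤ cF) (hcF1 : cF ≤ 1)
    (hγ0 : 0 ≤ γ₁) (hγ1 : γ₁ ≤ 1) (hω : 0 ≤ ω) (hα : 0 ≤ α) (hζ : 0 ≤ ζ)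
    (hc₂ : 0 ≤ c₂) (hc₁ : c₁ ^ 2 ≤ cF ^ 2) (hsum : c₁ ^ 2 + c₂ ^ 2 ≤ 1)
    (hle : ζ ≤ c₁ * α + c₂ * (γ₁ * ω)) :
    ζ ^ 2 ≤ (γ₁ ^ 2 + (1 - γ₁ ^ 2) * ((1 + cF) ^ 2 / 4)) * (α ^ 2 + ω ^ 2) := by
  set t : ℝ := (1 + cF) ^ 2 / 4 with htdef
  set K : ℝ := γ₁ ^ 2 + (1 - γ₁ ^ 2) * t with hKdef
  have h1γ : (0:ℝ) ≤ 1 - γ₁ ^ 2 := by nlinarith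
  have hct : c₁ ^ 2 ≤ t := by rw [htdef]; nlinarith
  have h7 : c₁ ^ 2 + γ₁ ^ 2 * c₂ ^ 2 ≤ K := by
    rw [hKdef]
    nlinarith [mul_le_mul_of_nonneg_left hct h1γ,
      mul_le_mul_of_nonneg_left hsum (sq_nonneg γ₁)]
  have h8 : (c₁ * α + γ₁ * c₂ * ω) ^ 2 ≤ (c₁ ^ 2 + γ₁ ^ 2 * c₂ ^ 2) * (α ^ 2 + ω ^ 2) := by
    nlinarith [sq_nonneg (c₁ * ω - γ₁ * c₂ * α)]
  have h9 : (c₁ ^ 2 + γ₁ ^ 2 * c₂ ^ 2) * (α ^ 2 + ω ^ 2) ≤ K * (α ^ 2 + ω ^ 2) :=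
    mul_le_mul_of_nonneg_right h7 (by positivity)
  have h10 : ζ ^ 2 ≤ (c₁ * α + γ₁ * c₂ * ω) ^ 2 := by
    have hle' : ζ ≤ c₁ * α + γ₁ * c₂ * ω := by linarith [hle]
    nlinarith [mul_self_le_mul_self hζ hle']
  linarith

lemma r_normalize (a b ζ A B : ℝ) (ha : 0 < a) (hb : 0 < b) (hζ : 0 < ζ)
    (hbes : (a⁻¹ * A) ^ 2 + (b⁻¹ * B) ^ 2 ≤ ζ ^ 2) :
    (A / (a * ζ)) ^ 2 + (B / (b * ζ)) ^ 2 ≤ 1 := by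
  have hEq : (A / (a * ζ)) ^ 2 + (B / (b * ζ)) ^ 2
      = ((a⁻¹ * A) ^ 2 + (b⁻¹ * B) ^ 2) / ζ ^ 2 := by
    field_simp
  rw [hEq, div_le_one (by positivity)]
  exact hbes

lemma r_zeta_eq (a b ζ A B : ℝ) (ha : a ≠ 0) (hb : b ≠ 0) (hζ : 0 < ζ)
    (hzz : ζ ^ 2 = A + B) :
    ζ = (A / (a * ζ)) * a + (B / (b * ζ)) * b := by
  have h1 : (A / (a * ζ)) * a + (B / (b * ζ)) * b = (A + B) / ζ := by
    field_simp
  rw [h1, ← hzz, pow_two, mul_div_assoc, div_self hζ.ne', mul_one]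

/-- The key geometric inequality. -/
lemma crux (cF γ₁ ω : ℝ) (hcF0 : 0 ≤ cF) (hcF1 : cF ≤ 1) (hγ0 : 0 ≤ γ₁) (hγ1 : γ₁ ≤ 1)
    (hω : 0 ≤ ω) (q e z : H)
    (hqe : ⟪q, e⟫ = 0)
    (hA : |⟪q, z⟫| ≤ cF * (‖q‖ * ‖z‖))
    (hzz : ‖z‖ ^ 2 = ⟪q, z⟫ + ⟪e, z⟫)
    (hβ : ‖e‖ ≤ γ₁ * ω) :
    ‖z‖ ^ 2 ≤ (γ₁ ^ 2 + (1 - γ₁ ^ 2) * ((1 + cF) ^ 2 / 4)) * (‖q‖ ^ 2 + ω ^ 2) := by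
  obtain ⟨hK0, hcK, hγK⟩ := rK_facts cF γ₁ hcF0 hcF1 hγ0 hγ1
  set K : ℝ := γ₁ ^ 2 + (1 - γ₁ ^ 2) * ((1 + cF) ^ 2 / 4) with hKdef
  have hα0 : 0 ≤ ‖q‖ := norm_nonneg q
  have hζ0 : 0 ≤ ‖z‖ := norm_nonneg z
  have hRHS : K * ‖q‖ ^ 2 ≤ K * (‖q‖ ^ 2 + ω ^ 2) := by
    have : ‖q‖ ^ 2 ≤ ‖q‖ ^ 2 + ω ^ 2 := by nlinarith [sq_nonneg ω]
    exact mul_le_mul_of_nonneg_left this hK0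
  have hRHSω : K * ω ^ 2 ≤ K * (‖q‖ ^ 2 + ω ^ 2) := by
    have : ω ^ 2 ≤ ‖q‖ ^ 2 + ω ^ 2 := by nlinarith [sq_nonneg ‖q‖]
    exact mul_le_mul_of_nonneg_left this hK0
  rcases eq_or_lt_of_le hζ0 with hz0 | hz0
  · have hr : (0:ℝ) ≤ K * (‖q‖ ^ 2 + ω ^ 2) := mul_nonneg hK0 (by positivity)
    rw [← hz0]
    simpa using hr
  rcases le_or_gt ⟪e, z⟫ 0 with hB | hB
  · have h1 : ‖z‖ ^ 2 ≤ cF * (‖q‖ * ‖z‖) := by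
      have := le_trans (le_abs_self _) hA
      linarith [hzz, hB, this]
    have h3 : ‖z‖ ^ 2 ≤ cF ^ 2 * ‖q‖ ^ 2 := r_smallcase cF ‖q‖ ‖z‖ hz0 h1
    calc ‖z‖ ^ 2 ≤ cF ^ 2 * ‖q‖ ^ 2 := h3
      _ ≤ K * ‖q‖ ^ 2 := mul_le_mul_of_nonneg_right hcK (sq_nonneg _)
      _ ≤ K * (‖q‖ ^ 2 + ω ^ 2) := hRHS
  · have he0 : e ≠ 0 := by
      intro h; rw [h, inner_zero_left] at hB; exact lt_irrefl 0 hB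
    have hβ0 : (0:ℝ) < ‖e‖ := norm_pos_iff.2 he0
    rcases eq_or_ne q 0 with hq0 | hq0
    · have h1 : ‖z‖ ^ 2 ≤ ‖e‖ * ‖z‖ := by
        have h2 : ⟪q, z⟫ = 0 := by rw [hq0, inner_zero_left]
        have h3 := real_inner_le_norm e z
        linarith [hzz]
      have h3 : ‖z‖ ^ 2 ≤ ‖e‖ ^ 2 * 1 ^ 2 := by
        have := r_smallcase ‖e‖ 1 ‖z‖ hz0 (by linarith [h1])
        simpa using by nlinarith [this]
      have h4 : ‖z‖ ^ 2 ≤ γ₁ ^ 2 * ω ^ 2 := by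
        have h5 := mul_self_le_mul_self (norm_nonneg e) hβ
        nlinarith [h3, h5]
      calc ‖z‖ ^ 2 ≤ γ₁ ^ 2 * ω ^ 2 := h4
        _ ≤ K * ω ^ 2 := mul_le_mul_of_nonneg_right hγK (sq_nonneg _)
        _ ≤ K * (‖q‖ ^ 2 + ω ^ 2) := hRHSω
    · have hα0' : (0:ℝ) < ‖q‖ := norm_pos_iff.2 hq0
      have hbes : (‖q‖⁻¹ * ⟪q, z⟫) ^ 2 + (‖e‖⁻¹ * ⟪e, z⟫) ^ 2 ≤ ‖z‖ ^ 2 := by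
        have := bessel_two ((‖q‖⁻¹ : ℝ) • q) ((‖e‖⁻¹ : ℝ) • e) z
          (norm_smul_inv_norm hq0) (norm_smul_inv_norm he0)
          (by rw [real_inner_smul_left, real_inner_smul_right, hqe]; ring)
        rwa [real_inner_smul_left, real_inner_smul_left] at this
      have hc₂0 : 0 ≤ ⟪e, z⟫ / (‖e‖ * ‖z‖) := div_nonneg hB.le (by positivity)
      have hc₁sq : (⟪q, z⟫ / (‖q‖ * ‖z‖)) ^ 2 ≤ cF ^ 2 := by
        have h1 : |⟪q, z⟫ / (‖q‖ * ‖z‖)| ≤ cF := by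
          rw [abs_div, abs_of_pos (by positivity : (0:ℝ) < ‖q‖ * ‖z‖),
            div_le_iff₀ (by positivity)]
          exact hA
        rw [← sq_abs]
        exact pow_le_pow_left₀ (abs_nonneg _) h1 2
      have hsum : (⟪q, z⟫ / (‖q‖ * ‖z‖)) ^ 2 + (⟪e, z⟫ / (‖e‖ * ‖z‖)) ^ 2 ≤ 1 :=
        r_normalize ‖q‖ ‖e‖ ‖z‖ ⟪q, z⟫ ⟪e, z⟫ hα0' hβ0 hz0 hbes
      have hζeq : ‖z‖ = (⟪q, z⟫ / (‖q‖ * ‖z‖)) * ‖q‖ + (⟪e, z⟫ / (‖e‖ * ‖z‖)) * ‖e‖ :=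
        r_zeta_eq ‖q‖ ‖e‖ ‖z‖ ⟪q, z⟫ ⟪e, z⟫ hα0'.ne' hβ0.ne' hz0 hzz
      have hζle : ‖z‖ ≤ (⟪q, z⟫ / (‖q‖ * ‖z‖)) * ‖q‖ + (⟪e, z⟫ / (‖e‖ * ‖z‖)) * (γ₁ * ω) := by
        refine hζeq.trans_le ?_
        have := mul_le_mul_of_nonneg_left hβ hc₂0
        linarith
      exact r_main cF γ₁ ω ‖q‖ ‖z‖ (⟪q, z⟫ / (‖q‖ * ‖z‖)) (⟪e, z⟫ / (‖e‖ * ‖z‖))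
        hcF0 hcF1 hγ0 hγ1 hω hα0 hζ0 hc₂0 hc₁sq hsum hζle

lemma r_assemble (γ₁ γ₂ K E N z e₂ yv yp q e₁ w : ℝ)
    (hγ₁0 : 0 ≤ γ₁) (hγ₁1 : γ₁ ≤ 1) (hγ₂0 : 0 ≤ γ₂) (hγ₂1 : γ₂ ≤ 1)
    (hN : N ^ 2 = z ^ 2 + e₂ ^ 2)
    (he₂ : e₂ ≤ γ₂ * yv) (he₂0 : 0 ≤ e₂) (hyv0 : 0 ≤ yv)
    (hE3 : yp ^ 2 = z ^ 2 + yv ^ 2)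
    (hE4 : yp ^ 2 = q ^ 2 + e₁ ^ 2)
    (he₁ : e₁ ≤ γ₁ * w) (he₁0 : 0 ≤ e₁) (hw0 : 0 ≤ w)
    (hz : z ^ 2 ≤ K * (q ^ 2 + w ^ 2)) (hK0 : 0 ≤ K)
    (hKE : γ₂ ^ 2 + (1 - γ₂ ^ 2) * K = E) :
    N ^ 2 ≤ E * (q ^ 2 + w ^ 2) := by
  have hγ₂sq : (0:ℝ) ≤ 1 - γ₂ ^ 2 := by nlinarith
  have p1 : e₂ ^ 2 ≤ γ₂ ^ 2 * yv ^ 2 := by nlinarith [mul_self_le_mul_self he₂0 he₂]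
  have p2 : e₁ ^ 2 ≤ γ₁ ^ 2 * w ^ 2 := by nlinarith [mul_self_le_mul_self he₁0 he₁]
  have p3 : γ₁ ^ 2 * w ^ 2 ≤ w ^ 2 := by
    have hγsq : γ₁ ^ 2 ≤ 1 := by nlinarith
    nlinarith [mul_le_mul_of_nonneg_right hγsq (sq_nonneg w)]
  have p4 : (1 - γ₂ ^ 2) * z ^ 2 ≤ (1 - γ₂ ^ 2) * (K * (q ^ 2 + w ^ 2)) :=
    mul_le_mul_of_nonneg_left hz hγ₂sq
  have p5 : yp ^ 2 ≤ q ^ 2 + w ^ 2 := by linarith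
  have p6 : γ₂ ^ 2 * yp ^ 2 ≤ γ₂ ^ 2 * (q ^ 2 + w ^ 2) :=
    mul_le_mul_of_nonneg_left p5 (sq_nonneg γ₂)
  nlinarith [p1, p4, p6, sq_nonneg yv]

lemma r_E_facts (cF γ₁ γ₂ : ℝ) (hcF0 : 0 ≤ cF) (hcFlt : cF < 1)
    (hγ₁0 : 0 ≤ γ₁) (hγ₁1 : γ₁ < 1) (hγ₂0 : 0 ≤ γ₂) (hγ₂1 : γ₂ < 1) :
    (1:ℝ) / 4 ≤ γ₁ ^ 2 + γ₂ ^ 2 - γ₁ ^ 2 * γ₂ ^ 2 +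
        (1 - γ₁ ^ 2) * (1 - γ₂ ^ 2) * ((1 + cF) ^ 2 / 4)
    ∧ γ₁ ^ 2 + γ₂ ^ 2 - γ₁ ^ 2 * γ₂ ^ 2 +
        (1 - γ₁ ^ 2) * (1 - γ₂ ^ 2) * ((1 + cF) ^ 2 / 4) < 1
    ∧ γ₁ ^ 2 ≤ γ₁ ^ 2 + γ₂ ^ 2 - γ₁ ^ 2 * γ₂ ^ 2 +
        (1 - γ₁ ^ 2) * (1 - γ₂ ^ 2) * ((1 + cF) ^ 2 / 4)
    ∧ γ₂ ^ 2 ≤ γ₁ ^ 2 + γ₂ ^ 2 - γ₁ ^ 2 * γ₂ ^ 2 +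
        (1 - γ₁ ^ 2) * (1 - γ₂ ^ 2) * ((1 + cF) ^ 2 / 4) := by
  have ha0 : (0:ℝ) < 1 - γ₁ ^ 2 := by nlinarith
  have hb0 : (0:ℝ) < 1 - γ₂ ^ 2 := by nlinarith
  have ha1 : 1 - γ₁ ^ 2 ≤ 1 := by nlinarith
  have hb1 : 1 - γ₂ ^ 2 ≤ 1 := by nlinarith
  have ht14 : (1:ℝ) / 4 ≤ (1 + cF) ^ 2 / 4 := by nlinarith
  have ht0 : (0:ℝ) ≤ (1 + cF) ^ 2 / 4 := by positivity
  have ht1 : (1 + cF) ^ 2 / 4 < 1 := by nlinarith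
  have hab : (0:ℝ) < (1 - γ₁ ^ 2) * (1 - γ₂ ^ 2) := mul_pos ha0 hb0
  have hab1 : (1 - γ₁ ^ 2) * (1 - γ₂ ^ 2) ≤ 1 := by
    calc (1 - γ₁ ^ 2) * (1 - γ₂ ^ 2) ≤ 1 * (1 - γ₂ ^ 2) :=
          mul_le_mul_of_nonneg_right ha1 hb0.le
      _ ≤ 1 := by linarith
  have key1 : (1 - γ₁ ^ 2) * (1 - γ₂ ^ 2) * (1 - (1 + cF) ^ 2 / 4) ≤ 3 / 4 := by
    calc (1 - γ₁ ^ 2) * (1 - γ₂ ^ 2) * (1 - (1 + cF) ^ 2 / 4)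
        ≤ 1 * (1 - (1 + cF) ^ 2 / 4) := mul_le_mul_of_nonneg_right hab1 (by linarith)
      _ ≤ 3 / 4 := by linarith
  have key2 : (0:ℝ) < (1 - γ₁ ^ 2) * (1 - γ₂ ^ 2) * (1 - (1 + cF) ^ 2 / 4) :=
    mul_pos hab (by linarith)
  have hg1 : (0:ℝ) ≤ γ₂ ^ 2 * (1 - γ₁ ^ 2) + (1 - γ₁ ^ 2) * (1 - γ₂ ^ 2) * ((1 + cF) ^ 2 / 4) := by
    have := mul_nonneg hab.le ht0
    nlinarith [mul_nonneg (sq_nonneg γ₂) ha0.le]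
  have hg2 : (0:ℝ) ≤ γ₁ ^ 2 * (1 - γ₂ ^ 2) + (1 - γ₁ ^ 2) * (1 - γ₂ ^ 2) * ((1 + cF) ^ 2 / 4) := by
    have := mul_nonneg hab.le ht0
    nlinarith [mul_nonneg (sq_nonneg γ₁) hb0.le]
  have e1 : γ₁ ^ 2 + γ₂ ^ 2 - γ₁ ^ 2 * γ₂ ^ 2 + (1 - γ₁ ^ 2) * (1 - γ₂ ^ 2) * ((1 + cF) ^ 2 / 4)
      = 1 - (1 - γ₁ ^ 2) * (1 - γ₂ ^ 2) * (1 - (1 + cF) ^ 2 / 4) := by ring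
  have e3 : γ₁ ^ 2 + γ₂ ^ 2 - γ₁ ^ 2 * γ₂ ^ 2 + (1 - γ₁ ^ 2) * (1 - γ₂ ^ 2) * ((1 + cF) ^ 2 / 4)
      = γ₁ ^ 2 + (γ₂ ^ 2 * (1 - γ₁ ^ 2) + (1 - γ₁ ^ 2) * (1 - γ₂ ^ 2) * ((1 + cF) ^ 2 / 4)) := by
    ring
  have e4 : γ₁ ^ 2 + γ₂ ^ 2 - γ₁ ^ 2 * γ₂ ^ 2 + (1 - γ₁ ^ 2) * (1 - γ₂ ^ 2) * ((1 + cF) ^ 2 / 4)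
      = γ₂ ^ 2 + (γ₁ ^ 2 * (1 - γ₂ ^ 2) + (1 - γ₁ ^ 2) * (1 - γ₂ ^ 2) * ((1 + cF) ^ 2 / 4)) := by
    ring
  refine ⟨?_, ?_, ?_, ?_⟩
  · rw [e1]; linarith [key1]
  · rw [e1]; linarith [key2]
  · rw [e3]; linarith [hg1]
  · rw [e4]; linarith [hg2]

end Aux

theorem composition_bam_rate_s
    {H : Type*} [NormedAddCommGroup H] [InnerProductSpace ℝ H] [CompleteSpace H]
    (U₁ U₂ : Submodule ℝ H)
    (hU₁ : IsClosed (U₁ : Set H)) (hU₂ : IsClosed (U₂ : Set H))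
    (hsum : IsClosed ((U₁ : Set H) + (U₂ : Set H)))
    (G₁ G₂ : H → H) (γ₁ γ₂ : ℝ)
    (hγ₁0 : 0 ≤ γ₁) (hγ₁1 : γ₁ < 1) (hγ₂0 : 0 ≤ γ₂) (hγ₂1 : γ₂ < 1)
    (hFix₁ : Function.fixedPoints G₁ = (U₁ : Set H))
    (hFix₂ : Function.fixedPoints G₂ = (U₂ : Set H))
    (P₁ P₂ P₁₂ : H → H)
    (hP₁ : IsProjOn (U₁ : Set H) P₁) (hP₂ : IsProjOn (U₂ : Set H) P₂)
    (hP₁₂ : IsProjOn ((U₁ ⊓ U₂ : Submodule ℝ H) : Set H) P₁₂)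
    (hPG₁ : ∀ x, P₁ (G₁ x) = P₁ x) (hPG₂ : ∀ x, P₂ (G₂ x) = P₂ x)
    (hineq₁ : ∀ x, ‖G₁ x - P₁ x‖ ≤ γ₁ * ‖x - P₁ x‖)
    (hineq₂ : ∀ x, ‖G₂ x - P₂ x‖ ≤ γ₂ * ‖x - P₂ x‖)
    (cF s : ℝ) (hcF : cF = friedrichsCos U₁ U₂)
    (hs : s = Real.sqrt (γ₁ ^ 2 + γ₂ ^ 2 - γ₁ ^ 2 * γ₂ ^ 2 +
                (1 - γ₁ ^ 2) * (1 - γ₂ ^ 2) * ((1 + cF) ^ 2 / 4))) :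
    max (max γ₁ γ₂) (1 / 2) ≤ s ∧ s < 1 ∧
    (∀ x, ‖G₂ (G₁ x) - P₁₂ x‖ ≤ s * ‖x - P₁₂ x‖) ∧
    Function.fixedPoints (G₂ ∘ G₁) = ((U₁ ⊓ U₂ : Submodule ℝ H) : Set H) ∧
    (∀ x, P₁₂ (G₂ (G₁ x)) = P₁₂ x) := by
  haveI : CompleteSpace U₁ := hU₁.completeSpace_coe
  haveI : CompleteSpace U₂ := hU₂.completeSpace_coe
  have hMc : IsClosed ((U₁ ⊓ U₂ : Submodule ℝ H) : Set H) := by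
    rw [Submodule.coe_inf]; exact hU₁.inter hU₂
  haveI : CompleteSpace (U₁ ⊓ U₂ : Submodule ℝ H) := hMc.completeSpace_coe
  have hcF0 : 0 ≤ cF := hcF ▸ fc_nonneg U₁ U₂
  have hcF1 : cF ≤ 1 := hcF ▸ fc_le_one U₁ U₂
  have hcFlt : cF < 1 := hcF ▸ fc_lt_one U₁ U₂ hU₁ hU₂ hsum
  set E : ℝ := γ₁ ^ 2 + γ₂ ^ 2 - γ₁ ^ 2 * γ₂ ^ 2 +
      (1 - γ₁ ^ 2) * (1 - γ₂ ^ 2) * ((1 + cF) ^ 2 / 4) with hEdef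
  set K : ℝ := γ₁ ^ 2 + (1 - γ₁ ^ 2) * ((1 + cF) ^ 2 / 4) with hKdef
  obtain ⟨hK0, hcK, hγK⟩ := rK_facts cF γ₁ hcF0 hcF1 hγ₁0 hγ₁1.le
  have hKE : γ₂ ^ 2 + (1 - γ₂ ^ 2) * K = E := by rw [hKdef, hEdef]; ring
  obtain ⟨hE14, hE1, hEγ₁, hEγ₂⟩ := r_E_facts cF γ₁ γ₂ hcF0 hcFlt hγ₁0 hγ₁1 hγ₂0 hγ₂1
  rw [← hEdef] at hE14 hE1 hEγ₁ hEγ₂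
  have hE0 : (0:ℝ) ≤ E := le_trans (by norm_num : (0:ℝ) ≤ 1/4) hE14
  have hs0 : 0 ≤ s := hs ▸ Real.sqrt_nonneg _
  have hs2 : s ^ 2 = E := by rw [hs]; exact Real.sq_sqrt hE0
  have hsmax : max (max γ₁ γ₂) (1 / 2) ≤ s := by
    rw [hs]
    apply max_le (max_le ?_ ?_) ?_
    · exact (Real.le_sqrt hγ₁0 hE0).2 hEγ₁
    · exact (Real.le_sqrt hγ₂0 hE0).2 hEγ₂
    · exact (Real.le_sqrt (by norm_num) hE0).2 (by nlinarith)
  have hslt : s < 1 := by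
    rw [hs]
    exact (Real.sqrt_lt' one_pos).2 (by nlinarith)
  -- projections are orthogonal projections
  have hP₁' : ∀ t, P₁ t = Submodule.orthogonalProjectionOnto U₁ t := IsProjOn.eq_proj U₁ hP₁
  have hP₂' : ∀ t, P₂ t = Submodule.orthogonalProjectionOnto U₂ t := IsProjOn.eq_proj U₂ hP₂
  have hP₁₂' : ∀ t, P₁₂ t = Submodule.orthogonalProjectionOnto (U₁ ⊓ U₂ : Submodule ℝ H) t :=
    IsProjOn.eq_proj _ hP₁₂
  have hMU₁ : (U₁ ⊓ U₂ : Submodule ℝ H) ≤ U₁ := inf_le_left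
  have hMU₂ : (U₁ ⊓ U₂ : Submodule ℝ H) ≤ U₂ := inf_le_right
  -- the key pointwise claims
  have key : ∀ x, ‖G₂ (G₁ x) - P₁₂ x‖ ≤ s * ‖x - P₁₂ x‖ ∧ P₁₂ (G₂ (G₁ x)) = P₁₂ x := by
    intro x
    set M : Submodule ℝ H := U₁ ⊓ U₂
    set p : H := (Submodule.orthogonalProjectionOnto M x : H) with hpdef
    set u : H := (Submodule.orthogonalProjectionOnto U₁ x : H) with hudef
    set y : H := G₁ x with hydef
    set v : H := (Submodule.orthogonalProjectionOnto U₂ y : H) with hvdef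
    -- basic equalities
    have hπ₁G : ((Submodule.orthogonalProjectionOnto U₁ y : U₁) : H) = u := by
      have h := hPG₁ x
      rw [hP₁' (G₁ x), hP₁' x] at h
      exact h
    have hπ₂G : ((Submodule.orthogonalProjectionOnto U₂ (G₂ y) : U₂) : H) = v := by
      have h := hPG₂ y
      rw [hP₂' (G₂ y), hP₂' y] at h
      exact h
    have comp₁ : ∀ t : H, ((Submodule.orthogonalProjectionOnto M ((Submodule.orthogonalProjectionOnto U₁ t : H)) : M) : H)
        = ((Submodule.orthogonalProjectionOnto M t : M) : H) :=
      fun t => congrArg _ (Submodule.orthogonalProjectionOnto_starProjection_of_le hMU₁ t)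
    have comp₂ : ∀ t : H, ((Submodule.orthogonalProjectionOnto M ((Submodule.orthogonalProjectionOnto U₂ t : H)) : M) : H)
        = ((Submodule.orthogonalProjectionOnto M t : M) : H) :=
      fun t => congrArg _ (Submodule.orthogonalProjectionOnto_starProjection_of_le hMU₂ t)
    have hpu : ((Submodule.orthogonalProjectionOnto M u : M) : H) = p := comp₁ x
    have hpy : ((Submodule.orthogonalProjectionOnto M y : M) : H) = p := by
      rw [← comp₁ y, hπ₁G, hpu]
    have hpv : ((Submodule.orthogonalProjectionOnto M v : M) : H) = p := by
      rw [← hpy, ← comp₂ y]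
    have hpG₂y : ((Submodule.orthogonalProjectionOnto M (G₂ y) : M) : H) = p := by
      rw [← comp₂ (G₂ y), hπ₂G, hpv]
    -- memberships
    have hw : x - u ∈ U₁ᗮ := Submodule.sub_starProjection_mem_orthogonal x
    have he₁ : y - u ∈ U₁ᗮ := by
      rw [← hπ₁G]; exact Submodule.sub_starProjection_mem_orthogonal y
    have hyv : y - v ∈ U₂ᗮ := Submodule.sub_starProjection_mem_orthogonal y
    have he₂ : G₂ y - v ∈ U₂ᗮ := by
      rw [← hπ₂G]; exact Submodule.sub_starProjection_mem_orthogonal (G₂ y)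
    have hpM : p ∈ M := (Submodule.orthogonalProjectionOnto M x).2
    have hq_mem : u - p ∈ U₁ :=
      Submodule.sub_mem _ (Submodule.orthogonalProjectionOnto U₁ x).2 (hMU₁ hpM)
    have hq_orth : u - p ∈ Mᗮ := by
      rw [← hpu]; exact Submodule.sub_starProjection_mem_orthogonal u
    have hv_mem : v ∈ U₂ := (Submodule.orthogonalProjectionOnto U₂ y).2
    have hz_mem : v - p ∈ U₂ := Submodule.sub_mem _ hv_mem (hMU₂ hpM)
    have hz_orth : v - p ∈ Mᗮ := by
      rw [← hpv]; exact Submodule.sub_starProjection_mem_orthogonal v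
    -- norm inequalities from BAM property
    have hne₁ : ‖y - u‖ ≤ γ₁ * ‖x - u‖ := by
      have h := hineq₁ x
      rwa [hP₁' x] at h
    have hne₂ : ‖G₂ y - v‖ ≤ γ₂ * ‖y - v‖ := by
      have h := hineq₂ y
      rwa [hP₂' y] at h
    -- Pythagoras identities
    have hinner_ze₂ : ⟪v - p, G₂ y - v⟫ = 0 :=
      Submodule.inner_right_of_mem_orthogonal hz_mem he₂
    have E1 : ‖G₂ y - p‖ ^ 2 = ‖v - p‖ ^ 2 + ‖G₂ y - v‖ ^ 2 := by
      have hd : G₂ y - p = (v - p) + (G₂ y - v) := by abel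
      rw [hd, norm_add_sq_real, hinner_ze₂]; ring
    have hinner_zyv : ⟪v - p, y - v⟫ = 0 :=
      Submodule.inner_right_of_mem_orthogonal hz_mem hyv
    have E3 : ‖y - p‖ ^ 2 = ‖v - p‖ ^ 2 + ‖y - v‖ ^ 2 := by
      have hd : y - p = (v - p) + (y - v) := by abel
      rw [hd, norm_add_sq_real, hinner_zyv]; ring
    have hinner_qe₁ : ⟪u - p, y - u⟫ = 0 :=
      Submodule.inner_right_of_mem_orthogonal hq_mem he₁
    have E4 : ‖y - p‖ ^ 2 = ‖u - p‖ ^ 2 + ‖y - u‖ ^ 2 := by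
      have hd : y - p = (u - p) + (y - u) := by abel
      rw [hd, norm_add_sq_real, hinner_qe₁]; ring
    have hinner_qw : ⟪u - p, x - u⟫ = 0 :=
      Submodule.inner_right_of_mem_orthogonal hq_mem hw
    have E5 : ‖x - p‖ ^ 2 = ‖u - p‖ ^ 2 + ‖x - u‖ ^ 2 := by
      have hd : x - p = (u - p) + (x - u) := by abel
      rw [hd, norm_add_sq_real, hinner_qw]; ring
    -- ⟨z, z⟩ decomposition
    have hzz : ‖v - p‖ ^ 2 = ⟪u - p, v - p⟫ + ⟪y - u, v - p⟫ := by
      have h1 : ⟪y - v, v - p⟫ = 0 := by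
        rw [real_inner_comm]; exact hinner_zyv
      have h2 : ⟪y - p, v - p⟫ = ‖v - p‖ ^ 2 := by
        have hd : y - p = (y - v) + (v - p) := by abel
        rw [hd, inner_add_left, h1, real_inner_self_eq_norm_sq]; ring
      have hd2 : y - p = (u - p) + (y - u) := by abel
      rw [← h2, hd2, inner_add_left]
    -- Friedrichs bound
    have hA : |⟪u - p, v - p⟫| ≤ cF * (‖u - p‖ * ‖v - p‖) := by
      rw [hcF]
      exact abs_inner_le_fc U₁ U₂ (Submodule.mem_inf.2 ⟨hq_mem, hq_orth⟩)
        (Submodule.mem_inf.2 ⟨hz_mem, hz_orth⟩)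
    have hqe₁0 : ⟪u - p, y - u⟫ = 0 := hinner_qe₁
    -- crux
    have hcrux : ‖v - p‖ ^ 2 ≤ K * (‖u - p‖ ^ 2 + ‖x - u‖ ^ 2) := by
      rw [hKdef]
      exact crux cF γ₁ ‖x - u‖ hcF0 hcF1 hγ₁0 hγ₁1.le (norm_nonneg _)
        (u - p) (y - u) (v - p) hqe₁0 hA hzz hne₁
    -- assemble
    have hfin : ‖G₂ y - p‖ ^ 2 ≤ E * (‖u - p‖ ^ 2 + ‖x - u‖ ^ 2) :=
      r_assemble γ₁ γ₂ K E ‖G₂ y - p‖ ‖v - p‖ ‖G₂ y - v‖ ‖y - v‖ ‖y - p‖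
        ‖u - p‖ ‖y - u‖ ‖x - u‖ hγ₁0 hγ₁1.le hγ₂0 hγ₂1.le E1 hne₂ (norm_nonneg _)
        (norm_nonneg _) E3 E4 hne₁ (norm_nonneg _) (norm_nonneg _) hcrux hK0 hKE
    have hineq : ‖G₂ y - p‖ ≤ s * ‖x - p‖ := by
      have h1 : ‖G₂ y - p‖ ^ 2 ≤ (s * ‖x - p‖) ^ 2 := by
        rw [mul_pow, hs2, E5]
        exact hfin
      have h2 := Real.sqrt_le_sqrt h1
      rwa [Real.sqrt_sq (norm_nonneg _), Real.sqrt_sq (by positivity)] at h2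
    constructor
    · rw [hP₁₂' x]
      exact hineq
    · rw [hP₁₂' x, hP₁₂' (G₂ (G₁ x))]
      show ((Submodule.orthogonalProjectionOnto M (G₂ y) : M) : H) = ((Submodule.orthogonalProjectionOnto M x : M) : H)
      rw [hpG₂y]
  refine ⟨hsmax, hslt, fun x => (key x).1, ?_, fun x => (key x).2⟩
  -- fixed points
  ext x
  simp only [Function.mem_fixedPoints, Function.IsFixedPt, Function.comp_apply, SetLike.mem_coe]
  constructor
  · intro hfx
    have h1 := (key x).1
    rw [hfx] at h1
    have h2 : ‖x - P₁₂ x‖ = 0 := r_collapse s ‖x - P₁₂ x‖ (norm_nonneg _) h1 hslt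
    have h3 : x = P₁₂ x := sub_eq_zero.1 (norm_eq_zero.1 h2)
    rw [h3]
    exact (hP₁₂ x).1
  · intro hx
    have hx₁ : G₁ x = x := by
      have : x ∈ Function.fixedPoints G₁ := by
        rw [hFix₁]; exact hMU₁ hx
      exact this
    have hx₂ : G₂ x = x := by
      have : x ∈ Function.fixedPoints G₂ := by
        rw [hFix₂]; exact hMU₂ hx
      exact this
    rw [hx₁, hx₂]
end
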